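/- arXiv:2401.12407 — 8 statements merged into one kernel-verified Lean document; each statement's English description precedes it below -/
import Mathlib

section
/- Let X be a real n×n nonnegative matrix with spectral radius ρ(X) < 1, and let Y = (I - X)^{-1} X. Then ρ(Y) = ρ(X)/(1 - ρ(X)). -/
open Matrix

/-- Spectral radius of a real square matrix: the supremum of the absolute values
of its complex eigenvalues. -/
noncomputable def specRad {n : ℕ} (M : Matrix (Fin n) (Fin n) ℝ) : ℝ :=
  ⨆ μ : spectrum ℂ (M.map (Complex.ofReal ·)), ‖(μ : ℂ)‖


open Filter
open scoped NNReal ENNReal Topology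

attribute [local instance] Matrix.linftyOpNormedRing Matrix.linftyOpNormedAlgebra

lemma ofReal_norm_eq_coe_nnnorm {E : Type*} [SeminormedAddGroup E] (a : E) :
    ENNReal.ofReal ‖a‖ = (‖a‖₊ : ℝ≥0∞) :=
  ENNReal.ofReal_eq_coe_nnreal _



variable {n : ℕ}

lemma entry_nnnorm_le (M : Matrix (Fin n) (Fin n) ℂ) (i j : Fin n) : ‖M i j‖₊ ≤ ‖M‖₊ := by
  rw [Matrix.linfty_opNNNorm_def]
  exact le_trans (Finset.single_le_sum (f := fun k => ‖M i k‖₊) (fun k _ => zero_le)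
    (Finset.mem_univ j)) (Finset.le_sup (f := fun i : Fin n => ∑ j, ‖M i j‖₊) (Finset.mem_univ i))

lemma entry_norm_le (M : Matrix (Fin n) (Fin n) ℂ) (i j : Fin n) : ‖M i j‖ ≤ ‖M‖ :=
  entry_nnnorm_le M i j

lemma norm_le_norm_entry (M N : Matrix (Fin n) (Fin n) ℂ)
    (h : ∀ i j, ‖M i j‖ ≤ ‖N i j‖) : ‖M‖ ≤ ‖N‖ := by
  have : ‖M‖₊ ≤ ‖N‖₊ := by
    rw [Matrix.linfty_opNNNorm_def, Matrix.linfty_opNNNorm_def]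
    refine Finset.sup_le fun i _ => le_trans (Finset.sum_le_sum fun j _ => h i j)
      (Finset.le_sup (f := fun i : Fin n => ∑ j, ‖N i j‖₊) (Finset.mem_univ i))
  exact this

noncomputable def entryCLM (i j : Fin n) : Matrix (Fin n) (Fin n) ℂ →L[ℂ] ℂ :=
  LinearMap.mkContinuous
    { toFun := fun M => M i j, map_add' := fun _ _ => rfl, map_smul' := fun _ _ => rfl }
    1 (fun M => by rw [one_mul]; exact entry_norm_le M i j)

@[simp] lemma entryCLM_apply (i j : Fin n) (M : Matrix (Fin n) (Fin n) ℂ) :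
    entryCLM i j M = M i j := rfl

variable {n : ℕ} (X : Matrix (Fin n) (Fin n) ℝ)

lemma bddAux (M : Matrix (Fin n) (Fin n) ℂ) :
    BddAbove (Set.range fun μ : spectrum ℂ M => ‖(μ : ℂ)‖) :=
  (Set.finite_range _).bddAbove

lemma abs_le_specRad {μ : ℂ} (hμ : μ ∈ spectrum ℂ (X.map (Complex.ofReal ·))) :
    ‖μ‖ ≤ specRad X :=
  le_ciSup (bddAux _) (⟨μ, hμ⟩ : spectrum ℂ (X.map (Complex.ofReal ·)))

lemma specRad_nonneg : 0 ≤ specRad X :=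
  Real.iSup_nonneg fun μ => norm_nonneg _

lemma exists_abs_eq_specRad (h : (spectrum ℂ (X.map (Complex.ofReal ·))).Nonempty) :
    ∃ μ ∈ spectrum ℂ (X.map (Complex.ofReal ·)), ‖μ‖ = specRad X := by
  haveI : Nonempty (spectrum ℂ (X.map (Complex.ofReal ·))) := h.to_subtype
  obtain ⟨m, hm⟩ := Finite.exists_max (fun μ : spectrum ℂ (X.map (Complex.ofReal ·)) =>
    ‖(μ : ℂ)‖)
  exact ⟨m, m.2, le_antisymm (le_ciSup (bddAux _) m) (ciSup_le hm)⟩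

lemma spectralRadius_eq :
    spectralRadius ℂ (X.map (Complex.ofReal ·)) = ENNReal.ofReal (specRad X) := by
  apply le_antisymm
  · refine iSup₂_le fun μ hμ => ?_
    rw [← ofReal_norm_eq_coe_nnnorm]
    exact ENNReal.ofReal_le_ofReal (abs_le_specRad X hμ)
  · rcases Set.eq_empty_or_nonempty (spectrum ℂ (X.map (Complex.ofReal ·))) with he | hne
    · have : IsEmpty (spectrum ℂ (X.map (Complex.ofReal ·))) := by
        rw [he]; exact Set.isEmpty_coe_sort.mpr rfl
      have h0 : specRad X = 0 := Real.iSup_of_isEmpty _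
      simp [h0]
    · obtain ⟨μ, hμ, hab⟩ := exists_abs_eq_specRad X hne
      rw [← hab]
      have h1 : ENNReal.ofReal (‖μ‖) = (‖μ‖₊ : ℝ≥0∞) := ofReal_norm_eq_coe_nnnorm μ
      rw [h1]
      exact le_iSup₂ (f := fun k (_ : k ∈ spectrum ℂ (X.map (Complex.ofReal ·))) => (‖k‖₊ : ℝ≥0∞)) μ hμ

variable {n : ℕ}

lemma summable_pow_mul (M : Matrix (Fin n) (Fin n) ℂ) {t : ℝ}
    (ht : spectralRadius ℂ M < ENNReal.ofReal t) :
    Summable fun k : ℕ => ‖M ^ k‖ * t⁻¹ ^ k := by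
  have ht0 : 0 < t := by
    by_contra h
    push_neg at h
    rw [ENNReal.ofReal_eq_zero.mpr h] at ht
    exact (not_lt_of_ge zero_le) ht
  -- pick r strictly between
  obtain ⟨r, hr0, hr1, hr2⟩ := ENNReal.lt_iff_exists_real_btwn.mp ht
  have hrt : r < t := (ENNReal.ofReal_lt_ofReal_iff ht0).mp hr2
  -- Gelfand
  have hG := spectrum.pow_nnnorm_pow_one_div_tendsto_nhds_spectralRadius M
  have hev : ∀ᶠ k : ℕ in atTop, ((‖M ^ k‖₊ : ℝ≥0∞)) ^ (1 / (k : ℝ)) < ENNReal.ofReal r :=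
    hG.eventually_lt_const hr1
  rw [eventually_atTop] at hev
  obtain ⟨N, hN⟩ := hev
  have key : ∀ k, N + 1 ≤ k → ‖M ^ k‖ ≤ r ^ k := by
    intro k hk
    have hk0 : (k : ℝ) ≠ 0 := Nat.cast_ne_zero.mpr (by omega)
    have h1 := hN k (by omega)
    have h2 : ((‖M ^ k‖₊ : ℝ≥0∞) ^ (1 / (k:ℝ))) ^ (k:ℝ) ≤ (ENNReal.ofReal r) ^ (k:ℝ) :=
      ENNReal.rpow_le_rpow h1.le (by positivity)
    rw [← ENNReal.rpow_mul, one_div, inv_mul_cancel₀ hk0, ENNReal.rpow_one] at h2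
    have h3 : (‖M ^ k‖₊ : ℝ≥0∞) ≤ ENNReal.ofReal (r ^ k) := by
      rwa [ENNReal.ofReal_rpow_of_nonneg hr0 (by positivity), Real.rpow_natCast] at h2
    rw [← ofReal_norm_eq_coe_nnnorm] at h3
    exact (ENNReal.ofReal_le_ofReal_iff (by positivity)).mp h3
  -- compare with geometric
  rw [← summable_nat_add_iff (N + 1)]
  have hgeom : Summable fun k : ℕ => (r * t⁻¹) ^ (N + 1) * (r * t⁻¹) ^ k := by
    apply Summable.mul_left
    apply summable_geometric_of_lt_one (by positivity)
    rw [mul_inv_lt_iff₀ ht0, one_mul]; exact hrt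
  refine Summable.of_nonneg_of_le (fun k => by positivity) (fun k => ?_) hgeom
  have := key (k + N + 1) (by omega)
  calc ‖M ^ (k + (N + 1))‖ * t⁻¹ ^ (k + (N + 1)) ≤ r ^ (k + (N+1)) * t⁻¹ ^ (k + (N+1)) := by
        apply mul_le_mul_of_nonneg_right _ (by positivity)
        rw [show k + (N + 1) = k + N + 1 by omega]; exact this
    _ = (r * t⁻¹) ^ (N + 1) * (r * t⁻¹) ^ k := by
        rw [pow_add, pow_add, mul_pow, mul_pow]; ring

lemma inverse_eq_tsum (M : Matrix (Fin n) (Fin n) ℂ) {lam : ℂ}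
    (h : spectralRadius ℂ M < ENNReal.ofReal (‖lam‖)) :
    IsUnit (algebraMap ℂ (Matrix (Fin n) (Fin n) ℂ) lam - M) ∧
    Ring.inverse (algebraMap ℂ (Matrix (Fin n) (Fin n) ℂ) lam - M)
      = ∑' k : ℕ, lam⁻¹ ^ (k + 1) • M ^ k := by
  have hlamabs : (0:ℝ) < ‖lam‖ := by
    by_contra hc; push_neg at hc
    rw [ENNReal.ofReal_eq_zero.mpr hc] at h; exact (not_lt_of_ge zero_le) h
  have hlam0 : lam ≠ 0 := by
    intro h0; rw [h0] at hlamabs; simp at hlamabs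
  have hunit : IsUnit (algebraMap ℂ (Matrix (Fin n) (Fin n) ℂ) lam - M) := by
    rw [← spectrum.mem_resolventSet_iff]
    apply spectrum.mem_resolventSet_of_spectralRadius_lt
    rwa [← ofReal_norm_eq_coe_nnnorm]
  refine ⟨hunit, ?_⟩
  have hnf : ∀ k : ℕ, ‖lam⁻¹ ^ k • M ^ k‖ = ‖M ^ k‖ * (‖lam‖)⁻¹ ^ k := by
    intro k
    rw [norm_smul, norm_pow lam⁻¹, norm_inv]
    ring
  have hf : Summable (fun k : ℕ => lam⁻¹ ^ k • M ^ k) := by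
    apply Summable.of_norm
    refine (summable_pow_mul M h).congr fun k => (hnf k).symm
  have hg : Summable (fun k : ℕ => lam⁻¹ ^ (k + 1) • M ^ k) := by
    have := hf.const_smul lam⁻¹
    refine this.congr fun k => ?_
    rw [smul_smul, ← pow_succ']
  set f : ℕ → Matrix (Fin n) (Fin n) ℂ := fun k => lam⁻¹ ^ k • M ^ k with hfdef
  set S := ∑' k, f k with hS
  set T := ∑' k : ℕ, lam⁻¹ ^ (k + 1) • M ^ k with hT
  have hshift : HasSum (fun k => f (k + 1)) (S - f 0) := by
    refine (hasSum_nat_add_iff 1).mpr ?_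
    simpa using hf.hasSum
  have htel : HasSum (fun k => f k - f (k + 1)) (1 : Matrix (Fin n) (Fin n) ℂ) := by
    have := hf.hasSum.sub hshift
    have h0 : f 0 = 1 := by simp [hfdef]
    rw [h0, sub_sub_cancel] at this
    exact this
  have hL : HasSum (fun k => (algebraMap ℂ (Matrix (Fin n) (Fin n) ℂ) lam - M) *
      (lam⁻¹ ^ (k + 1) • M ^ k))
      ((algebraMap ℂ (Matrix (Fin n) (Fin n) ℂ) lam - M) * T) := hg.hasSum.mul_left _
  have hterm : ∀ k : ℕ, (algebraMap ℂ (Matrix (Fin n) (Fin n) ℂ) lam - M) *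
      (lam⁻¹ ^ (k + 1) • M ^ k) = f k - f (k + 1) := by
    intro k
    rw [Algebra.algebraMap_eq_smul_one, sub_mul, smul_mul_assoc, one_mul, mul_smul_comm,
      smul_smul, hfdef]
    have h2 : lam * lam⁻¹ ^ (k + 1) = lam⁻¹ ^ k := by
      rw [pow_succ']
      field_simp
    rw [h2, ← pow_succ']

  have h1 : (algebraMap ℂ (Matrix (Fin n) (Fin n) ℂ) lam - M) * T = 1 :=
    hL.unique (htel.congr_fun hterm)
  calc Ring.inverse (algebraMap ℂ (Matrix (Fin n) (Fin n) ℂ) lam - M)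
      = Ring.inverse (algebraMap ℂ (Matrix (Fin n) (Fin n) ℂ) lam - M) *
        ((algebraMap ℂ (Matrix (Fin n) (Fin n) ℂ) lam - M) * T) := by rw [h1, mul_one]
    _ = T := by rw [← mul_assoc, Ring.inverse_mul_cancel _ hunit, one_mul]

lemma pow_entry_nonneg (X : Matrix (Fin n) (Fin n) ℝ) (hX : ∀ i j, 0 ≤ X i j) (k : ℕ) :
    ∀ i j, 0 ≤ (X ^ k) i j := by
  induction k with
  | zero =>
    intro i j
    by_cases h : i = j <;> simp [pow_zero, Matrix.one_apply, h]
  | succ k ih =>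
    intro i j
    rw [pow_succ, Matrix.mul_apply]
    exact Finset.sum_nonneg fun l _ => mul_nonneg (ih i l) (hX l j)

lemma map_pow_eq (X : Matrix (Fin n) (Fin n) ℝ) (k : ℕ) :
    (X.map (Complex.ofReal ·)) ^ k = (X ^ k).map (Complex.ofReal ·) := by
  have h1 : (X.map (Complex.ofReal ·)) = Complex.ofRealHom.mapMatrix X := rfl
  have h2 : ((X ^ k).map (Complex.ofReal ·)) = Complex.ofRealHom.mapMatrix (X ^ k) := rfl
  rw [h1, h2, map_pow]

lemma summable_g (M : Matrix (Fin n) (Fin n) ℂ) {lam : ℂ}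
    (h : spectralRadius ℂ M < ENNReal.ofReal (‖lam‖)) :
    Summable (fun k : ℕ => lam⁻¹ ^ (k + 1) • M ^ k) := by
  apply Summable.of_norm
  have : Summable (fun k : ℕ => (‖lam‖)⁻¹ * (‖M ^ k‖ * (‖lam‖)⁻¹ ^ k)) :=
    (summable_pow_mul M h).mul_left _
  refine this.congr fun k => ?_
  rw [norm_smul, norm_pow lam⁻¹, norm_inv, pow_succ]
  ring

lemma norm_inverse_le (X : Matrix (Fin n) (Fin n) ℝ) (hX : ∀ i j, 0 ≤ X i j) {t : ℝ} {lam : ℂ}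
    (habs : ‖lam‖ = t)
    (h : spectralRadius ℂ (X.map (Complex.ofReal ·)) < ENNReal.ofReal t) :
    ‖Ring.inverse (algebraMap ℂ (Matrix (Fin n) (Fin n) ℂ) lam - X.map (Complex.ofReal ·))‖ ≤
    ‖Ring.inverse (algebraMap ℂ (Matrix (Fin n) (Fin n) ℂ) (t : ℂ) - X.map (Complex.ofReal ·))‖ := by
  set A := X.map (Complex.ofReal ·) with hA
  have ht0 : 0 < t := by
    by_contra hc; push_neg at hc
    rw [ENNReal.ofReal_eq_zero.mpr hc] at h; exact (not_lt_of_ge zero_le) h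
  have habst : ‖(t : ℂ)‖ = t := by
    rw [Complex.norm_real, Real.norm_eq_abs, abs_of_nonneg ht0.le]
  have hlam : spectralRadius ℂ A < ENNReal.ofReal (‖lam‖) := by rwa [habs]
  have htt : spectralRadius ℂ A < ENNReal.ofReal (‖(t : ℂ)‖) := by rwa [habst]
  rw [(inverse_eq_tsum A hlam).2, (inverse_eq_tsum A htt).2]
  apply norm_le_norm_entry
  intro i j
  -- entries of the tsums
  have e1 : (∑' k : ℕ, lam⁻¹ ^ (k + 1) • A ^ k) i j
      = ∑' k : ℕ, lam⁻¹ ^ (k + 1) * (A ^ k) i j := by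
    have := (entryCLM i j).map_tsum (summable_g A hlam)
    simpa using this
  have e2 : (∑' k : ℕ, (t : ℂ)⁻¹ ^ (k + 1) • A ^ k) i j
      = ∑' k : ℕ, (t : ℂ)⁻¹ ^ (k + 1) * (A ^ k) i j := by
    have := (entryCLM i j).map_tsum (summable_g A htt)
    simpa using this
  rw [e1, e2]
  -- entry values are real and nonneg
  have hent : ∀ k : ℕ, (A ^ k) i j = ((X ^ k) i j : ℂ) := by
    intro k; rw [hA, map_pow_eq]; rfl
  have hnn : ∀ k : ℕ, 0 ≤ (X ^ k) i j := fun k => pow_entry_nonneg X hX k i j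
  -- summability of the real comparison series
  have hsumR : Summable (fun k : ℕ => t⁻¹ ^ (k + 1) * (X ^ k) i j) := by
    refine Summable.of_nonneg_of_le
      (fun k => mul_nonneg (by positivity) (hnn k)) (fun k => ?_)
      ((summable_pow_mul A h).mul_left t⁻¹)
    have hbd : (X ^ k) i j ≤ ‖A ^ k‖ := by
      calc (X ^ k) i j = ‖((A ^ k) i j)‖ := by
            rw [hent k, Complex.norm_real, Real.norm_eq_abs, abs_of_nonneg (hnn k)]
        _ ≤ ‖A ^ k‖ := entry_norm_le _ i j
    calc t⁻¹ ^ (k + 1) * (X ^ k) i j ≤ t⁻¹ ^ (k + 1) * ‖A ^ k‖ :=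
          mul_le_mul_of_nonneg_left hbd (by positivity)
      _ = t⁻¹ * (‖A ^ k‖ * t⁻¹ ^ k) := by rw [pow_succ]; ring
  -- identify the t-series entry as a real tsum
  have e3 : (∑' k : ℕ, (t : ℂ)⁻¹ ^ (k + 1) * (A ^ k) i j)
      = ((∑' k : ℕ, t⁻¹ ^ (k + 1) * (X ^ k) i j : ℝ) : ℂ) := by
    rw [Complex.ofReal_tsum]
    congr 1
    ext k
    rw [hent k]
    push_cast
    ring
  -- norm comparison
  have hnorms : Summable (fun k : ℕ => ‖lam⁻¹ ^ (k + 1) * (A ^ k) i j‖) := by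
    refine hsumR.congr fun k => ?_
    rw [norm_mul, norm_pow, norm_inv, habs, hent k, Complex.norm_real, Real.norm_eq_abs, abs_of_nonneg (hnn k)]
  calc ‖∑' k : ℕ, lam⁻¹ ^ (k + 1) * (A ^ k) i j‖
      ≤ ∑' k : ℕ, ‖lam⁻¹ ^ (k + 1) * (A ^ k) i j‖ := norm_tsum_le_tsum_norm hnorms
    _ = ∑' k : ℕ, t⁻¹ ^ (k + 1) * (X ^ k) i j := by
        congr 1; ext k
        rw [norm_mul, norm_pow, norm_inv, habs, hent k,
          Complex.norm_real, Real.norm_eq_abs, abs_of_nonneg (hnn k)]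
    _ = ‖(∑' k : ℕ, (t : ℂ)⁻¹ ^ (k + 1) * (A ^ k) i j)‖ := by
        rw [e3, Complex.norm_real, Real.norm_eq_abs, abs_of_nonneg]
        exact tsum_nonneg fun k => mul_nonneg (by positivity) (hnn k)

lemma specRad_mem_spectrum (X : Matrix (Fin n) (Fin n) ℝ) (hn : 0 < n)
    (hX : ∀ i j, 0 ≤ X i j) :
    ((specRad X : ℝ) : ℂ) ∈ spectrum ℂ (X.map (Complex.ofReal ·)) := by
  haveI : Nonempty (Fin n) := ⟨⟨0, hn⟩⟩
  set A := X.map (Complex.ofReal ·) with hA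
  set ρ := specRad X with hρdef
  by_contra hmem
  have hne : (spectrum ℂ A).Nonempty := spectrum.nonempty A
  obtain ⟨μ₀, hμ₀, habsμ₀⟩ := exists_abs_eq_specRad X hne
  have hρ0 : 0 ≤ ρ := specRad_nonneg X
  have hρpos : 0 < ρ := by
    rcases hρ0.lt_or_eq with hlt | heq
    · exact hlt
    · exfalso
      apply hmem
      have hm0 : μ₀ = 0 := by
        have h0 : ‖μ₀‖ = 0 := by rw [habsμ₀]; linarith
        exact norm_eq_zero.mp h0
      have hcast : ((ρ : ℝ) : ℂ) = μ₀ := by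
        rw [hm0]
        norm_cast
        linarith
      rw [hcast]; exact hμ₀
  have hunit : IsUnit (algebraMap ℂ (Matrix (Fin n) (Fin n) ℂ) ((ρ : ℝ) : ℂ) - A) :=
    spectrum.notMem_iff.mp hmem
  set F : ℝ → Matrix (Fin n) (Fin n) ℂ :=
    fun t => Ring.inverse (algebraMap ℂ (Matrix (Fin n) (Fin n) ℂ) ((t : ℝ) : ℂ) - A) with hF
  have hFc : ContinuousAt F ρ := by
    have h1 : ContinuousAt (Ring.inverse : Matrix (Fin n) (Fin n) ℂ → _)
        (algebraMap ℂ (Matrix (Fin n) (Fin n) ℂ) ((ρ : ℝ) : ℂ) - A) := by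
      have := NormedRing.inverse_continuousAt hunit.unit
      rwa [IsUnit.unit_spec] at this
    have h2 : Continuous fun t : ℝ =>
        algebraMap ℂ (Matrix (Fin n) (Fin n) ℂ) ((t : ℝ) : ℂ) - A := by
      simp only [Algebra.algebraMap_eq_smul_one]
      exact (Complex.continuous_ofReal.smul continuous_const).sub continuous_const
    exact ContinuousAt.comp (g := (Ring.inverse : Matrix (Fin n) (Fin n) ℂ → _)) h1
      h2.continuousAt
  have hbnd : ∀ᶠ t in nhds ρ, ‖F t‖ ≤ ‖F ρ‖ + 1 := by
    have hc : ContinuousAt (fun t => ‖F t‖) ρ := hFc.norm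
    exact hc.eventually_le_const (by linarith : ‖F ρ‖ < ‖F ρ‖ + 1)
  obtain ⟨δ, hδ0, hδ⟩ := Metric.eventually_nhds_iff.mp hbnd
  set C := ‖F ρ‖ + 1 with hC
  have hCpos : 0 < C := by positivity
  have hone : (0:ℝ) < ‖(1 : Matrix (Fin n) (Fin n) ℂ)‖ := by
    simp [norm_pos_iff]
  set ε := min (δ / 2) (1 / (2 * C * ‖(1 : Matrix (Fin n) (Fin n) ℂ)‖)) with hε
  have hε0 : 0 < ε := by positivity
  set s := ρ + ε with hs
  have hsρ : ρ < s := by simp [hs, hε0]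
  have hsub : s - ρ = ε := by rw [hs]; ring
  have hsrad : spectralRadius ℂ A < ENNReal.ofReal s := by
    rw [spectralRadius_eq]
    exact ENNReal.ofReal_lt_ofReal_iff (by linarith) |>.mpr hsρ
  set lam := (s / ρ : ℝ) • μ₀ with hlam
  have habsμρ : ‖μ₀‖ = ρ := habsμ₀
  have hsdivρ : (0:ℝ) ≤ s / ρ := div_nonneg (by linarith) hρpos.le
  have hlamabs : ‖lam‖ = s := by
    rw [hlam, Complex.real_smul, norm_mul, Complex.norm_real, Real.norm_eq_abs, habsμρ,
      abs_of_nonneg hsdivρ, div_mul_cancel₀ _ hρpos.ne']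
  have hlamrad : spectralRadius ℂ A < ENNReal.ofReal (‖lam‖) := by
    rwa [hlamabs]
  have hulam : IsUnit (algebraMap ℂ (Matrix (Fin n) (Fin n) ℂ) lam - A) :=
    (inverse_eq_tsum A hlamrad).1
  have hFs : ‖F s‖ ≤ C := by
    apply hδ
    rw [Real.dist_eq, hsub, abs_of_pos hε0]
    calc ε ≤ δ / 2 := min_le_left _ _
      _ < δ := by linarith
  have hblam : ‖Ring.inverse (algebraMap ℂ (Matrix (Fin n) (Fin n) ℂ) lam - A)‖ ≤ C :=
    le_trans (norm_inverse_le X hX hlamabs hsrad) hFs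
  have hdist : ‖(algebraMap ℂ (Matrix (Fin n) (Fin n) ℂ) μ₀ - A)
      - (algebraMap ℂ (Matrix (Fin n) (Fin n) ℂ) lam - A)‖
      = (s - ρ) * ‖(1 : Matrix (Fin n) (Fin n) ℂ)‖ := by
    have heq1 : (algebraMap ℂ (Matrix (Fin n) (Fin n) ℂ) μ₀ - A)
        - (algebraMap ℂ (Matrix (Fin n) (Fin n) ℂ) lam - A)
        = (μ₀ - lam) • (1 : Matrix (Fin n) (Fin n) ℂ) := by
      simp only [Algebra.algebraMap_eq_smul_one, sub_smul]
      abel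
    rw [heq1, norm_smul]
    congr 1
    have heq2 : μ₀ - lam = ((1 - s / ρ : ℝ) : ℂ) * μ₀ := by
      rw [hlam, Complex.real_smul]
      push_cast
      ring
    rw [heq2, norm_mul, Complex.norm_real, Real.norm_eq_abs, habsμρ,
      abs_of_nonpos (by rw [sub_nonpos, le_div_iff₀ hρpos, one_mul]; exact hsρ.le)]
    field_simp
    ring
  have hcontra : ¬ IsUnit (algebraMap ℂ (Matrix (Fin n) (Fin n) ℂ) μ₀ - A) :=
    spectrum.mem_iff.mp hμ₀
  have hkey : ‖(↑hulam.unit⁻¹ : Matrix (Fin n) (Fin n) ℂ)‖⁻¹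
      ≤ (s - ρ) * ‖(1 : Matrix (Fin n) (Fin n) ℂ)‖ := by
    by_contra hlt
    push_neg at hlt
    apply hcontra
    have hcond : ‖(algebraMap ℂ (Matrix (Fin n) (Fin n) ℂ) μ₀ - A) - ↑hulam.unit‖
        < ‖(↑hulam.unit⁻¹ : Matrix (Fin n) (Fin n) ℂ)‖⁻¹ := by
      rw [IsUnit.unit_spec, hdist]; exact hlt
    have hval := (Units.ofNearby hulam.unit
      (algebraMap ℂ (Matrix (Fin n) (Fin n) ℂ) μ₀ - A) hcond).isUnit
    rwa [Units.val_ofNearby] at hval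
  have hinv : (↑hulam.unit⁻¹ : Matrix (Fin n) (Fin n) ℂ)
      = Ring.inverse (algebraMap ℂ (Matrix (Fin n) (Fin n) ℂ) lam - A) := by
    rw [← Ring.inverse_unit hulam.unit, IsUnit.unit_spec]
  have hnormpos : 0 < ‖(↑hulam.unit⁻¹ : Matrix (Fin n) (Fin n) ℂ)‖ := Units.norm_pos _
  have h1 : C⁻¹ ≤ (s - ρ) * ‖(1 : Matrix (Fin n) (Fin n) ℂ)‖ := by
    refine le_trans ?_ hkey
    have hble : ‖(↑hulam.unit⁻¹ : Matrix (Fin n) (Fin n) ℂ)‖ ≤ C := by rw [hinv]; exact hblam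
    exact inv_anti₀ hnormpos hble
  have h3 : ε * ‖(1 : Matrix (Fin n) (Fin n) ℂ)‖ ≤ 1 / (2 * C) := by
    have hεle : ε ≤ 1 / (2 * C * ‖(1 : Matrix (Fin n) (Fin n) ℂ)‖) := min_le_right _ _
    have hmul : ε * ‖(1 : Matrix (Fin n) (Fin n) ℂ)‖ ≤
        (1 / (2 * C * ‖(1 : Matrix (Fin n) (Fin n) ℂ)‖)) * ‖(1 : Matrix (Fin n) (Fin n) ℂ)‖ :=
      mul_le_mul_of_nonneg_right hεle hone.le
    refine hmul.trans (le_of_eq ?_)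
    field_simp
  rw [hsub] at h1
  have h4 : C⁻¹ ≤ 1 / (2 * C) := h1.trans h3
  rw [inv_eq_one_div] at h4
  have hCC : 1 / (2 * C) < 1 / C := by
    apply div_lt_div_of_pos_left one_pos hCpos
    linarith
  linarith

lemma specRad_le (M : Matrix (Fin n) (Fin n) ℝ) {B : ℝ} (hB : 0 ≤ B)
    (h : ∀ μ ∈ spectrum ℂ (M.map (Complex.ofReal ·)), ‖μ‖ ≤ B) :
    specRad M ≤ B := by
  rcases isEmpty_or_nonempty (spectrum ℂ (M.map (Complex.ofReal ·))) with he | hne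
  · unfold specRad
    rw [Real.iSup_of_isEmpty]
    exact hB
  · exact ciSup_le fun μ => h μ μ.2

lemma mem_spectrum_iff_det (M : Matrix (Fin n) (Fin n) ℂ) (z : ℂ) :
    z ∈ spectrum ℂ M ↔ (algebraMap ℂ (Matrix (Fin n) (Fin n) ℂ) z - M).det = 0 := by
  rw [spectrum.mem_iff, Matrix.isUnit_iff_isUnit_det, isUnit_iff_ne_zero, not_ne_iff]

lemma map_inv_mul_aux (X : Matrix (Fin n) (Fin n) ℝ)
    (h : IsUnit (1 - X.map (Complex.ofReal ·))) :
    ((1 - X)⁻¹ * X).map (Complex.ofReal ·)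
      = (1 - X.map (Complex.ofReal ·))⁻¹ * X.map (Complex.ofReal ·) := by
  set A := X.map (Complex.ofReal ·) with hA
  have hphi : ∀ M : Matrix (Fin n) (Fin n) ℝ,
      M.map (Complex.ofReal ·) = Complex.ofRealHom.mapMatrix M := fun _ => rfl
  have hone : ((1 - X).map (Complex.ofReal ·)) = 1 - A := by
    rw [hphi, map_sub, _root_.map_one, hA, hphi]
  have hAd : IsUnit (1 - A).det := (Matrix.isUnit_iff_isUnit_det _).mp h
  have hXd : IsUnit (1 - X).det := by
    rw [isUnit_iff_ne_zero]
    intro h0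
    have : (1 - A).det = 0 := by
      rw [← hone, hphi, ← RingHom.map_det, h0, map_zero]
    rw [this] at hAd
    simp at hAd
  have hinv : ((1 - X)⁻¹).map (Complex.ofReal ·) = (1 - A)⁻¹ := by
    symm
    apply Matrix.inv_eq_right_inv
    calc (1 - A) * ((1 - X)⁻¹).map (Complex.ofReal ·)
        = ((1 - X).map (Complex.ofReal ·)) * ((1 - X)⁻¹).map (Complex.ofReal ·) := by
          rw [hone]
      _ = ((1 - X) * (1 - X)⁻¹).map (Complex.ofReal ·) := by
          rw [hphi, hphi, hphi, ← _root_.map_mul]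
      _ = 1 := by rw [Matrix.mul_nonsing_inv _ hXd, hphi, _root_.map_one]
  calc ((1 - X)⁻¹ * X).map (Complex.ofReal ·)
      = ((1 - X)⁻¹).map (Complex.ofReal ·) * X.map (Complex.ofReal ·) := by
        rw [hphi, hphi, hphi, ← _root_.map_mul]
    _ = (1 - A)⁻¹ * A := by rw [hinv, hA]

lemma spec_map (A : Matrix (Fin n) (Fin n) ℂ) (h1 : (1:ℂ) ∉ spectrum ℂ A) (lam : ℂ) :
    lam ∈ spectrum ℂ ((1 - A)⁻¹ * A) ↔ ∃ μ ∈ spectrum ℂ A, lam = μ / (1 - μ) := by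
  have hu : IsUnit (1 - A) := by
    have := spectrum.notMem_iff.mp h1
    rwa [_root_.map_one] at this
  have hud : IsUnit (1 - A).det := (Matrix.isUnit_iff_isUnit_det _).mp hu
  have hudz : (1 - A).det ≠ 0 := hud.ne_zero
  have key : ∀ z : ℂ, (1 - A) * (algebraMap ℂ (Matrix (Fin n) (Fin n) ℂ) z - (1 - A)⁻¹ * A)
      = z • (1 : Matrix (Fin n) (Fin n) ℂ) - (z + 1) • A := by
    intro z
    have hcanc : (1 - A) * ((1 - A)⁻¹ * A) = A := by
      rw [← mul_assoc, Matrix.mul_nonsing_inv _ hud, one_mul]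
    rw [Algebra.algebraMap_eq_smul_one, mul_sub, hcanc, mul_smul_comm, mul_one]
    rw [smul_sub, add_smul, one_smul]
    abel
  have hdetiff : ∀ z : ℂ, z ∈ spectrum ℂ ((1 - A)⁻¹ * A)
      ↔ (z • (1 : Matrix (Fin n) (Fin n) ℂ) - (z + 1) • A).det = 0 := by
    intro z
    rw [mem_spectrum_iff_det, ← key z, Matrix.det_mul, mul_eq_zero]
    constructor
    · exact Or.inr
    · rintro (h | h)
      · exact absurd h hudz
      · exact h
  constructor
  · intro hlam
    have hdet := (hdetiff lam).mp hlam
    have hlamne : lam ≠ -1 := by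
      intro h
      rw [h] at hdet
      norm_num at hdet
      rw [Matrix.det_neg, Matrix.det_one, mul_one] at hdet
      exact pow_ne_zero _ (by norm_num : (-1:ℂ) ≠ 0) hdet
    have h1lam : 1 + lam ≠ 0 := fun h => hlamne (by linear_combination h)
    set μ := lam / (1 + lam) with hμ
    have hid : lam • (1 : Matrix (Fin n) (Fin n) ℂ) - (lam + 1) • A
        = (1 + lam) • (μ • (1 : Matrix (Fin n) (Fin n) ℂ) - A) := by
      rw [smul_sub, smul_smul, hμ, mul_div_cancel₀ _ h1lam]
      congr 1
      rw [add_comm]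
    rw [hid, Matrix.det_smul, mul_eq_zero] at hdet
    have hdet2 : (μ • (1 : Matrix (Fin n) (Fin n) ℂ) - A).det = 0 := by
      rcases hdet with h | h
      · exact absurd h (pow_ne_zero _ h1lam)
      · exact h
    refine ⟨μ, ?_, ?_⟩
    · rw [mem_spectrum_iff_det, Algebra.algebraMap_eq_smul_one]
      exact hdet2
    · rw [hμ]
      have : 1 - lam / (1 + lam) = 1 / (1 + lam) := by field_simp; ring
      rw [this]
      field_simp
  · rintro ⟨μ, hμmem, rfl⟩
    have hμ1 : μ ≠ 1 := fun h => h1 (h ▸ hμmem)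
    have h1μ : 1 - μ ≠ 0 := fun h => hμ1 (by linear_combination -h)
    rw [hdetiff]
    have h1lam : 1 + μ / (1 - μ) = 1 / (1 - μ) := by field_simp; ring
    have hrlam : μ / (1 - μ) / (1 + μ / (1 - μ)) = μ := by
      rw [h1lam]
      field_simp
    have h1lamne : 1 + μ / (1 - μ) ≠ 0 := by
      rw [h1lam]
      exact div_ne_zero one_ne_zero h1μ
    have hid : (μ / (1 - μ)) • (1 : Matrix (Fin n) (Fin n) ℂ) - (μ / (1 - μ) + 1) • A
        = (1 + μ / (1 - μ)) • (μ • (1 : Matrix (Fin n) (Fin n) ℂ) - A) := by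
      rw [smul_sub, smul_smul]
      have : (1 + μ / (1 - μ)) * μ = μ / (1 - μ) := by
        field_simp
        ring
      rw [this]
      congr 1
      rw [add_comm]
    rw [hid, Matrix.det_smul, mul_eq_zero]
    right
    rw [mem_spectrum_iff_det, Algebra.algebraMap_eq_smul_one] at hμmem
    exact hμmem

theorem stmt_0 {n : ℕ} (X : Matrix (Fin n) (Fin n) ℝ)
    (hX : ∀ i j, 0 ≤ X i j) (hρ : specRad X < 1) :
    specRad ((1 - X)⁻¹ * X) = specRad X / (1 - specRad X) := by
  rcases Nat.eq_zero_or_pos n with hn | hn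
  · subst hn
    have he : ∀ M : Matrix (Fin 0) (Fin 0) ℝ, specRad M = 0 := by
      intro M
      haveI : IsEmpty (spectrum ℂ (M.map (Complex.ofReal ·))) := by
        constructor
        rintro ⟨z, hz⟩
        exact (spectrum.mem_iff.mp hz) (isUnit_of_subsingleton _)
      unfold specRad
      exact Real.iSup_of_isEmpty _
    rw [he, he]
    norm_num
  · set A := X.map (Complex.ofReal ·) with hA
    set ρ := specRad X with hρdef
    have hρ0 : 0 ≤ ρ := specRad_nonneg X
    have h1ρ : 0 < 1 - ρ := by linarith
    have h1A : (1:ℂ) ∉ spectrum ℂ A := by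
      intro hmem
      have := abs_le_specRad X hmem
      simp only [norm_one] at this
      linarith
    have hu : IsUnit (1 - A) := by
      have := spectrum.notMem_iff.mp h1A
      rwa [_root_.map_one] at this
    have hsetY : spectrum ℂ (((1 - X)⁻¹ * X).map (Complex.ofReal ·))
        = spectrum ℂ ((1 - A)⁻¹ * A) := by rw [map_inv_mul_aux X hu]
    have hρmem : ((ρ : ℝ) : ℂ) ∈ spectrum ℂ A := specRad_mem_spectrum X hn hX
    have hcast : ((ρ : ℝ) : ℂ) / (1 - ((ρ : ℝ) : ℂ)) = ((ρ / (1 - ρ) : ℝ) : ℂ) := by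
      push_cast
      ring
    have hν₀ : ((ρ / (1 - ρ) : ℝ) : ℂ) ∈ spectrum ℂ ((1 - A)⁻¹ * A) := by
      rw [← hcast]
      exact (spec_map A h1A _).mpr ⟨_, hρmem, rfl⟩
    apply le_antisymm
    · refine specRad_le _ (by positivity) ?_
      intro ν hν
      rw [hsetY] at hν
      obtain ⟨μ, hμmem, rfl⟩ := (spec_map A h1A ν).mp hν
      have habsμ : ‖μ‖ ≤ ρ := abs_le_specRad X hμmem
      have h1μpos : 0 < 1 - ‖μ‖ := by linarith
      have hlow : 1 - ‖μ‖ ≤ ‖(1 - μ)‖ := by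
        have := norm_sub_norm_le (1:ℂ) μ
        simpa using this
      rw [norm_div]
      calc ‖μ‖ / ‖(1 - μ)‖
          ≤ ‖μ‖ / (1 - ‖μ‖) :=
            div_le_div_of_nonneg_left (norm_nonneg μ) h1μpos hlow
        _ ≤ ρ / (1 - ρ) := div_le_div₀ hρ0 habsμ h1ρ (by linarith)
    · have hmem' : ((ρ / (1 - ρ) : ℝ) : ℂ)
          ∈ spectrum ℂ (((1 - X)⁻¹ * X).map (Complex.ofReal ·)) := by
        rw [hsetY]
        exact hν₀
      have := abs_le_specRad ((1 - X)⁻¹ * X) hmem'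
      rwa [Complex.norm_real, Real.norm_eq_abs, abs_of_nonneg (by positivity)] at this
end

section
/- Let A be an n×n real matrix, b ∈ ℝⁿ, and let x* be a solution of the AVE A x - |x| = b. Suppose x ∈ ℝⁿ is such that A - D(x) is invertible and sign(x_j) = sign(x*_j) for every index j with x*_j ≠ 0. Then (A - D(x))^{-1} b = x*. -/
open Matrix

/-- `D x = diag (sign x)`. -/
noncomputable def signDiag {n : ℕ} (x : Fin n → ℝ) : Matrix (Fin n) (Fin n) ℝ :=
  Matrix.diagonal fun j => Real.sign (x j)

lemma mySignMulSelf (y : ℝ) : Real.sign y * y = |y| := by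
  rcases lt_trichotomy y 0 with h | h | h
  · rw [Real.sign_of_neg h, abs_of_neg h]; ring
  · simp [h]
  · rw [Real.sign_of_pos h, abs_of_pos h]; ring

theorem stmt_3 {n : ℕ} (A : Matrix (Fin n) (Fin n) ℝ) (b xs x : Fin n → ℝ)
    (hxs : A *ᵥ xs - (fun j => |xs j|) = b)
    (hinv : IsUnit (A - signDiag x).det)
    (hsign : ∀ j, xs j ≠ 0 → Real.sign (x j) = Real.sign (xs j)) :
    (A - signDiag x)⁻¹ *ᵥ b = xs := by
  have key : (A - signDiag x) *ᵥ xs = b := by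
    rw [Matrix.sub_mulVec, ← hxs]
    congr 1
    funext j
    simp only [signDiag, Matrix.mulVec_diagonal]
    by_cases h : xs j = 0
    · simp [h]
    · rw [hsign j h, mySignMulSelf]
  rw [← key, Matrix.mulVec_mulVec, Matrix.nonsing_inv_mul _ hinv, Matrix.one_mulVec]
end

section
/- Let A be an invertible n×n real matrix with ρ(|A^{-1}|) < 1/3, b ∈ ℝⁿ, and let x* be a solution of Ax - |x| = b. Then for any x⁰ ∈ ℝⁿ, the generalized Newton iteration x^{i+1} = (A - D(x^i))^{-1} b is well defined and converges to x*; in particular x* is the unique solution. -/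
open Matrix Filter

/-- Entrywise absolute value of a matrix. -/
def absM {n : ℕ} (M : Matrix (Fin n) (Fin n) ℝ) : Matrix (Fin n) (Fin n) ℝ :=
  Matrix.of fun i j => |M i j|

open scoped NNReal ENNReal

section SR
attribute [local instance] Matrix.linftyOpNormedAddCommGroup Matrix.linftyOpNormedRing
  Matrix.linftyOpNormedAlgebra

lemma row_sum_le_norm {n : ℕ} (M : Matrix (Fin n) (Fin n) ℂ) (i : Fin n) :
    ∑ j, ‖M i j‖ ≤ ‖M‖ := by
  rw [Matrix.linfty_opNorm_def]
  have h1 : (∑ j, ‖M i j‖₊ : ℝ≥0) ≤ (Finset.univ : Finset (Fin n)).sup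
      (fun i => ∑ j, ‖M i j‖₊) :=
    Finset.le_sup (f := fun i => ∑ j, ‖M i j‖₊) (Finset.mem_univ i)
  calc ∑ j, ‖M i j‖ = ((∑ j, ‖M i j‖₊ : ℝ≥0) : ℝ) := by push_cast; rfl
    _ ≤ _ := by exact_mod_cast h1

lemma entry_pow_nonneg {n : ℕ} (C : Matrix (Fin n) (Fin n) ℝ) (hC : ∀ i j, 0 ≤ C i j) :
    ∀ m i j, 0 ≤ (C ^ m) i j := by
  intro m
  induction m with
  | zero => intro i j; simp [Matrix.one_apply]; positivity
  | succ m ih =>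
    intro i j
    rw [pow_succ, Matrix.mul_apply]
    exact Finset.sum_nonneg fun k _ => mul_nonneg (ih i k) (hC k j)

lemma exists_vr {n : ℕ} (C : Matrix (Fin n) (Fin n) ℝ) (hC : ∀ i j, 0 ≤ C i j)
    (h : specRad C < 1 / 3) :
    ∃ (v : Fin n → ℝ) (r : ℝ), (∀ j, 1 ≤ v j) ∧ 0 ≤ r ∧ r < 1 / 3 ∧
      ∀ j, (C *ᵥ v) j ≤ r * v j := by
  haveI : CompleteSpace (Matrix (Fin n) (Fin n) ℂ) := FiniteDimensional.complete ℂ _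
  set Cc : Matrix (Fin n) (Fin n) ℂ := C.map (Complex.ofReal ·) with hCc
  -- spectral radius bound
  have hb : BddAbove (Set.range fun μ : spectrum ℂ Cc => ‖(μ : ℂ)‖) := by
    rw [← Set.image_eq_range]
    exact ((spectrum.isCompact (𝕜 := ℂ) Cc).image continuous_norm).bddAbove
  have hsr : spectralRadius ℂ Cc < ENNReal.ofReal (1 / 3) := by
    refine lt_of_le_of_lt (b := ENNReal.ofReal (specRad C)) ?_
      ((ENNReal.ofReal_lt_ofReal_iff (by norm_num)).2 h)
    rw [spectralRadius]
    refine iSup₂_le fun μ hμ => ?_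
    have h1 : ‖μ‖ ≤ specRad C := le_ciSup hb (⟨μ, hμ⟩ : spectrum ℂ Cc)
    rw [← ENNReal.ofReal_coe_nnreal, coe_nnnorm]
    exact ENNReal.ofReal_le_ofReal h1
  -- Gelfand
  have hg := spectrum.pow_nnnorm_pow_one_div_tendsto_nhds_spectralRadius Cc
  obtain ⟨k, hk1, hk⟩ : ∃ k : ℕ, 1 ≤ k ∧
      (‖Cc ^ k‖₊ : ℝ≥0∞) ^ (1 / (k : ℝ)) < ENNReal.ofReal (1 / 3) :=
    ((eventually_ge_atTop 1).and (hg.eventually_lt_const hsr)).exists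
  have hk0 : (k : ℝ) ≠ 0 := by exact_mod_cast Nat.one_le_iff_ne_zero.mp hk1
  have hkk : (‖Cc ^ k‖₊ : ℝ≥0∞) < ENNReal.ofReal ((1 / 3 : ℝ) ^ k) := by
    have h2 := ENNReal.rpow_lt_rpow hk (by positivity : (0:ℝ) < k)
    rwa [← ENNReal.rpow_mul, one_div, inv_mul_cancel₀ hk0, ENNReal.rpow_one,
      ENNReal.ofReal_rpow_of_pos (by norm_num), Real.rpow_natCast] at h2
  have hs : ‖Cc ^ k‖ < (1 / 3 : ℝ) ^ k := by
    rw [← ENNReal.ofReal_coe_nnreal, coe_nnnorm] at hkk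
    exact (ENNReal.ofReal_lt_ofReal_iff (by positivity)).1 hkk
  set s := ‖Cc ^ k‖ with hsdef
  have hs0 : 0 ≤ s := norm_nonneg _
  have hmap : Cc ^ k = (C ^ k).map (Complex.ofReal ·) := by
    have : Cc = Complex.ofRealHom.mapMatrix C := rfl
    rw [this, ← map_pow]; rfl
  -- row sums of C^k bounded by s
  have hrow : ∀ i, ∑ j, (C ^ k) i j ≤ s := by
    intro i
    calc ∑ j, (C ^ k) i j ≤ ∑ j, ‖(Cc ^ k) i j‖ := by
          refine Finset.sum_le_sum fun j _ => ?_
          rw [hmap]; simp [Matrix.map_apply, Complex.norm_real]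
          exact le_abs_self _
      _ ≤ s := row_sum_le_norm _ i
  -- build v
  set w : ℕ → Fin n → ℝ := fun m => (C ^ m) *ᵥ (fun _ => (1:ℝ)) with hw
  have hw0 : ∀ m i, 0 ≤ w m i := by
    intro m i
    simp only [hw, Matrix.mulVec, dotProduct]
    exact Finset.sum_nonneg fun j _ => mul_nonneg (entry_pow_nonneg C hC m i j) zero_le_one
  set v : Fin n → ℝ := fun i => ∑ m ∈ Finset.range k, (3:ℝ) ^ m * w m i with hv
  have hv1 : ∀ i, 1 ≤ v i := by
    intro i
    have h0 : (3:ℝ) ^ 0 * w 0 i = 1 := by simp [hw, Matrix.one_mulVec]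
    calc (1:ℝ) = (3:ℝ) ^ 0 * w 0 i := h0.symm
      _ ≤ v i := Finset.single_le_sum (f := fun m => (3:ℝ) ^ m * w m i)
          (fun m _ => mul_nonneg (by positivity) (hw0 m i))
          (Finset.mem_range.2 (Nat.lt_of_lt_of_le Nat.zero_lt_one hk1))
  have hvpos : ∀ i, 0 < v i := fun i => lt_of_lt_of_le one_pos (hv1 i)
  -- C *ᵥ v identity
  have hCv_eq : ∀ i, 3 * (C *ᵥ v) i = v i + (3:ℝ) ^ k * w k i - 1 := by
    intro i
    have hCw : ∀ m, (C *ᵥ w m) = w (m + 1) := by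
      intro m
      simp only [hw]
      rw [Matrix.mulVec_mulVec, ← pow_succ']
    have hwsum : ∀ m, (C *ᵥ w m) i = ∑ j, C i j * w m j := by
      intro m; simp [Matrix.mulVec, dotProduct]
    have hlin : (C *ᵥ v) i = ∑ m ∈ Finset.range k, (3:ℝ) ^ m * w (m+1) i := by
      have hstart : (C *ᵥ v) i = ∑ j, C i j * ∑ m ∈ Finset.range k, (3:ℝ) ^ m * w m j := by
        simp [Matrix.mulVec, dotProduct, hv]
      rw [hstart]
      calc ∑ j, C i j * ∑ m ∈ Finset.range k, (3:ℝ) ^ m * w m j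
          = ∑ j, ∑ m ∈ Finset.range k, C i j * ((3:ℝ) ^ m * w m j) := by
            simp [Finset.mul_sum]
        _ = ∑ m ∈ Finset.range k, ∑ j, C i j * ((3:ℝ) ^ m * w m j) := Finset.sum_comm
        _ = ∑ m ∈ Finset.range k, (3:ℝ) ^ m * w (m+1) i := by
            refine Finset.sum_congr rfl fun m _ => ?_
            rw [← hCw m, hwsum m, Finset.mul_sum]
            exact Finset.sum_congr rfl fun j _ => by ring
    rw [hlin, Finset.mul_sum]
    have h3 : ∀ m ∈ Finset.range k, 3 * ((3:ℝ) ^ m * w (m+1) i) = (3:ℝ) ^ (m+1) * w (m+1) i :=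
      fun m _ => by ring
    rw [Finset.sum_congr rfl h3]
    have h4 : ∑ m ∈ Finset.range (k+1), (3:ℝ) ^ m * w m i
        = (∑ m ∈ Finset.range k, (3:ℝ) ^ (m+1) * w (m+1) i) + (3:ℝ) ^ 0 * w 0 i :=
      Finset.sum_range_succ' (fun m => (3:ℝ) ^ m * w m i) k
    have h5 : ∑ m ∈ Finset.range (k+1), (3:ℝ) ^ m * w m i
        = (∑ m ∈ Finset.range k, (3:ℝ) ^ m * w m i) + (3:ℝ) ^ k * w k i :=
      Finset.sum_range_succ (fun m => (3:ℝ) ^ m * w m i) k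
    have h0 : (3:ℝ) ^ 0 * w 0 i = 1 := by simp [hw, Matrix.one_mulVec]
    have hvi : v i = ∑ m ∈ Finset.range k, (3:ℝ) ^ m * w m i := by simp [hv]
    rw [h0] at h4
    rw [hvi]
    linarith
  -- δ
  set δ : ℝ := 1 - 3 ^ k * s with hδ
  have hδpos : 0 < δ := by
    have : (3:ℝ) ^ k * s < 3 ^ k * (1/3:ℝ) ^ k := by
      apply mul_lt_mul_of_pos_left hs (by positivity)
    have h33 : (3:ℝ) ^ k * (1/3:ℝ) ^ k = 1 := by
      rw [← mul_pow]; norm_num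
    simp only [hδ]; nlinarith
  have hwks : ∀ i, w k i ≤ s := by
    intro i
    have : w k i = ∑ j, (C ^ k) i j := by simp [hw, Matrix.mulVec, dotProduct]
    rw [this]; exact hrow i
  have hCvle : ∀ i, (C *ᵥ v) i ≤ (v i - δ) / 3 := by
    intro i
    have h5 := hCv_eq i
    have h6 : (3:ℝ) ^ k * w k i ≤ 3 ^ k * s :=
      mul_le_mul_of_nonneg_left (hwks i) (by positivity)
    nlinarith
  -- choose r
  set M : ℝ := 1 + ∑ i, v i with hM
  have hMpos : 0 < M := by
    have : (0:ℝ) ≤ ∑ i, v i := Finset.sum_nonneg fun i _ => le_of_lt (hvpos i)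
    linarith
  have hvM : ∀ i, v i ≤ M := by
    intro i
    have : v i ≤ ∑ i, v i :=
      Finset.single_le_sum (fun j _ => le_of_lt (hvpos j)) (Finset.mem_univ i)
    linarith
  refine ⟨v, max (1/3 - δ/(3*M)) 0, hv1, le_max_right _ _, ?_, ?_⟩
  · apply max_lt _ (by norm_num)
    have : 0 < δ/(3*M) := by positivity
    linarith
  · intro i
    have h7 : (C *ᵥ v) i ≤ (1/3 - δ/(3*M)) * v i := by
      have h8 : δ/(3*M) * v i ≤ δ/3 := by
        rw [div_mul_eq_mul_div, mul_comm]
        rw [div_le_div_iff₀ (by positivity) (by norm_num)]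
        have := hvM i
        nlinarith [hvpos i]
      have := hCvle i
      nlinarith
    exact le_trans h7 (mul_le_mul_of_nonneg_right (le_max_left _ _) (le_of_lt (hvpos i)))

end SR

section Aux

lemma abs_sign_le_one (a : ℝ) : |Real.sign a| ≤ 1 := by
  rcases lt_trichotomy a 0 with h | h | h
  · rw [Real.sign_of_neg h]; norm_num
  · rw [h, Real.sign_zero]; norm_num
  · rw [Real.sign_of_pos h]; norm_num

lemma sign_mul_self_eq_abs (a : ℝ) : Real.sign a * a = |a| := by
  rcases lt_trichotomy a 0 with h | h | h
  · rw [Real.sign_of_neg h, abs_of_neg h]; ring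
  · rw [h, Real.sign_zero, abs_zero, mul_zero]
  · rw [Real.sign_of_pos h, abs_of_pos h, one_mul]

lemma sign_mul_sub_abs (a c : ℝ) : abs (Real.sign a * c - |c|) ≤ 2 * |c - a| := by
  rcases lt_trichotomy a 0 with h | h | h
  · rw [Real.sign_of_neg h]
    rcases le_or_gt c 0 with hc | hc
    · rw [abs_of_nonpos hc]
      have : (-1 : ℝ) * c - -c = 0 := by ring
      rw [this, abs_zero]
      positivity
    · rw [abs_of_pos hc]
      have h1 : (-1 : ℝ) * c - c = -(2 * c) := by ring
      rw [h1, abs_neg, abs_of_pos (by linarith), abs_of_pos (by linarith : (0:ℝ) < c - a)]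
      linarith
  · rw [h, Real.sign_zero, zero_mul, zero_sub, abs_neg, abs_abs, sub_zero]
    linarith [abs_nonneg c]
  · rw [Real.sign_of_pos h, one_mul]
    rcases le_or_gt 0 c with hc | hc
    · rw [abs_of_nonneg hc, sub_self, abs_zero]
      positivity
    · rw [abs_of_neg hc]
      have h1 : c - -c = 2 * c := by ring
      rw [h1, abs_of_neg (by linarith : 2 * c < 0),
        abs_of_neg (by linarith : c - a < 0)]
      linarith

end Aux

theorem stmt_5 {n : ℕ} (A : Matrix (Fin n) (Fin n) ℝ) (hA : IsUnit A.det)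
    (hρ : specRad (absM A⁻¹) < 1 / 3) (b : Fin n → ℝ) (xs : Fin n → ℝ)
    (hxs : A *ᵥ xs - (fun j => |xs j|) = b) :
    (∀ x0 : Fin n → ℝ, ∀ xseq : ℕ → Fin n → ℝ, xseq 0 = x0 →
      (∀ i, xseq (i + 1) = (A - signDiag (xseq i))⁻¹ *ᵥ b) →
        (∀ i, IsUnit (A - signDiag (xseq i)).det) ∧
          Tendsto xseq atTop (nhds xs)) ∧
      ∀ y : Fin n → ℝ, A *ᵥ y - (fun j => |y j|) = b → y = xs := by
  classical
  set C := absM A⁻¹ with hCdef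
  have hC0 : ∀ i j, 0 ≤ C i j := fun i j => abs_nonneg _
  obtain ⟨v, r, hv1, hr0, hr3, hCv⟩ := exists_vr C hC0 hρ
  have hvpos : ∀ j, 0 < v j := fun j => lt_of_lt_of_le one_pos (hv1 j)
  have h1r : 0 < 1 - r := by linarith
  -- |A⁻¹ z| ≤ C |z| entrywise
  have habs : ∀ (z : Fin n → ℝ) (j : Fin n),
      |(A⁻¹ *ᵥ z) j| ≤ (C *ᵥ fun k => |z k|) j := by
    intro z j
    simp only [Matrix.mulVec, dotProduct, hCdef, absM, Matrix.of_apply]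
    calc |∑ k, A⁻¹ j k * z k| ≤ ∑ k, |A⁻¹ j k * z k| := Finset.abs_sum_le_sum_abs _ _
      _ = ∑ k, |A⁻¹ j k| * |z k| := by simp [abs_mul]
  -- monotonicity of C *ᵥ
  have hmono : ∀ (z w : Fin n → ℝ), (∀ k, z k ≤ w k) → ∀ j, (C *ᵥ z) j ≤ (C *ᵥ w) j := by
    intro z w hzw j
    simp only [Matrix.mulVec, dotProduct]
    exact Finset.sum_le_sum fun k _ => mul_le_mul_of_nonneg_left (hzw k) (hC0 j k)
  -- contraction auxiliary lemma
  have haux : ∀ (u : Fin n → ℝ) (c : ℝ), 0 ≤ c →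
      (∀ j, |u j| ≤ (C *ᵥ fun k => |u k|) j + c * v j) →
      ∀ j, |u j| ≤ (c / (1 - r)) * v j := by
    intro u c hc h j
    obtain ⟨j0, -, hj0⟩ := Finset.exists_max_image Finset.univ (fun k => |u k| / v k)
      ⟨j, Finset.mem_univ j⟩
    set t := |u j0| / v j0 with htdef
    have ht0 : 0 ≤ t := div_nonneg (abs_nonneg _) (le_of_lt (hvpos j0))
    have htb : ∀ k, |u k| ≤ t * v k := by
      intro k
      have h1 := hj0 k (Finset.mem_univ k)
      calc |u k| = |u k| / v k * v k := (div_mul_cancel₀ _ (ne_of_gt (hvpos k))).symm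
        _ ≤ t * v k := mul_le_mul_of_nonneg_right h1 (le_of_lt (hvpos k))
    have hu0 : |u j0| = t * v j0 := by
      rw [htdef, div_mul_cancel₀ _ (ne_of_gt (hvpos j0))]
    have hCu : (C *ᵥ fun k => |u k|) j0 ≤ t * (r * v j0) := by
      calc (C *ᵥ fun k => |u k|) j0 ≤ (C *ᵥ fun k => t * v k) j0 := hmono _ _ htb j0
        _ = t * (C *ᵥ v) j0 := by
            simp only [Matrix.mulVec, dotProduct, Finset.mul_sum]
            exact Finset.sum_congr rfl fun k _ => by ring
        _ ≤ t * (r * v j0) := mul_le_mul_of_nonneg_left (hCv j0) ht0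
    have key : |u j0| ≤ r * |u j0| + c * v j0 := by
      have h2 := h j0
      nlinarith [hCu, hu0]
    have ht : t ≤ c / (1 - r) := by
      rw [le_div_iff₀ h1r]
      have hvj0 := hvpos j0
      rw [hu0] at key
      have h6 : t * (1 - r) * v j0 ≤ c * v j0 := by nlinarith
      exact le_of_mul_le_mul_right h6 hvj0
    calc |u j| ≤ t * v j := htb j
      _ ≤ c / (1 - r) * v j := mul_le_mul_of_nonneg_right ht (le_of_lt (hvpos j))
  -- the diagonal sign matrix shrinks entrywise
  have hDle : ∀ (x z : Fin n → ℝ) (k : Fin n), |(signDiag x *ᵥ z) k| ≤ |z k| := by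
    intro x z k
    rw [signDiag, Matrix.mulVec_diagonal, abs_mul]
    calc |Real.sign (x k)| * |z k| ≤ 1 * |z k| :=
      mul_le_mul_of_nonneg_right (abs_sign_le_one _) (abs_nonneg _)
      _ = |z k| := one_mul _
  -- invertibility
  have hinv : ∀ x : Fin n → ℝ, IsUnit (A - signDiag x).det := by
    intro x
    rw [isUnit_iff_ne_zero]
    intro hdet0
    obtain ⟨w, hw0, hww⟩ := (Matrix.exists_mulVec_eq_zero_iff).2 hdet0
    have hAw : A *ᵥ w = signDiag x *ᵥ w := by
      rw [Matrix.sub_mulVec] at hww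
      exact sub_eq_zero.1 hww
    have hw : w = A⁻¹ *ᵥ (signDiag x *ᵥ w) := by
      rw [← hAw, Matrix.mulVec_mulVec, Matrix.nonsing_inv_mul A hA, Matrix.one_mulVec]
    have hbound : ∀ j, |w j| ≤ (C *ᵥ fun k => |w k|) j + 0 * v j := by
      intro j
      rw [zero_mul, add_zero]
      calc |w j| = |(A⁻¹ *ᵥ (signDiag x *ᵥ w)) j| := by rw [← hw]
        _ ≤ (C *ᵥ fun k => |(signDiag x *ᵥ w) k|) j := habs _ j
        _ ≤ (C *ᵥ fun k => |w k|) j := hmono _ _ (fun k => hDle x w k) j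
    have h7 := haux w 0 le_rfl hbound
    refine hw0 (funext fun j => ?_)
    have h8 := h7 j
    rw [zero_div, zero_mul] at h8
    exact abs_nonpos_iff.1 h8
  -- A xs = b + |xs|
  have hAxs : ∀ j, (A *ᵥ xs) j = b j + |xs j| := by
    intro j
    have h9 := congrFun hxs j
    simp only [Pi.sub_apply] at h9
    linarith
  -- one iteration step contracts
  have hstep : ∀ (xp xc : Fin n → ℝ), xc = (A - signDiag xp)⁻¹ *ᵥ b →
      ∀ t : ℝ, 0 ≤ t → (∀ j, |xp j - xs j| ≤ t * v j) →
      ∀ j, |xc j - xs j| ≤ (2 * r / (1 - r) * t) * v j := by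
    intro xp xc hxc t ht hd
    have hDu : (A - signDiag xp) *ᵥ xc = b := by
      rw [hxc, Matrix.mulVec_mulVec, Matrix.mul_nonsing_inv _ (hinv xp), Matrix.one_mulVec]
    have hAxc : ∀ j, (A *ᵥ xc) j = b j + (signDiag xp *ᵥ xc) j := by
      intro j
      rw [Matrix.sub_mulVec] at hDu
      have := congrFun hDu j
      simp only [Pi.sub_apply] at this
      linarith
    set u : Fin n → ℝ := fun j => xc j - xs j with hu
    have hAu : A *ᵥ u = fun j => (signDiag xp *ᵥ xc) j - |xs j| := by
      have h10 : u = xc - xs := rfl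
      rw [h10, Matrix.mulVec_sub]
      funext j
      simp only [Pi.sub_apply, hAxc j, hAxs j]
      ring
    have huA : u = A⁻¹ *ᵥ (fun j => (signDiag xp *ᵥ xc) j - |xs j|) := by
      rw [← hAu, Matrix.mulVec_mulVec, Matrix.nonsing_inv_mul A hA, Matrix.one_mulVec]
    have hDxc : ∀ k, abs ((signDiag xp *ᵥ xc) k - |xs k|) ≤ |u k| + 2 * |xp k - xs k| := by
      intro k
      rw [signDiag, Matrix.mulVec_diagonal]
      have h11 := sign_mul_sub_abs (xp k) (xs k)
      have h12 : Real.sign (xp k) * xc k - |xs k|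
          = Real.sign (xp k) * (xc k - xs k) + (Real.sign (xp k) * xs k - |xs k|) := by ring
      rw [h12]
      calc abs (Real.sign (xp k) * (xc k - xs k) + (Real.sign (xp k) * xs k - |xs k|))
          ≤ |Real.sign (xp k) * (xc k - xs k)| + abs (Real.sign (xp k) * xs k - |xs k|) :=
            abs_add_le _ _
        _ ≤ |u k| + 2 * |xp k - xs k| := by
            have h13 : |Real.sign (xp k) * (xc k - xs k)| ≤ |u k| := by
              rw [abs_mul]
              calc |Real.sign (xp k)| * |xc k - xs k| ≤ 1 * |xc k - xs k| :=
                  mul_le_mul_of_nonneg_right (abs_sign_le_one _) (abs_nonneg _)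
                _ = |u k| := by rw [one_mul]
            have h14 : |xs k - xp k| = |xp k - xs k| := abs_sub_comm _ _
            rw [h14] at h11
            linarith
    have hb2 : ∀ j, |u j| ≤ (C *ᵥ fun k => |u k|) j + (2 * t * r) * v j := by
      intro j
      have h15 : |u j| ≤ (C *ᵥ fun k => abs ((signDiag xp *ᵥ xc) k - |xs k|)) j := by
        calc |u j| = abs ((A⁻¹ *ᵥ (fun k => (signDiag xp *ᵥ xc) k - |xs k|)) j) := by
              rw [← huA]
          _ ≤ _ := habs _ j
      have h16 : (C *ᵥ fun k => abs ((signDiag xp *ᵥ xc) k - |xs k|)) j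
          ≤ (C *ᵥ fun k => |u k| + 2 * (t * v k)) j := by
        refine hmono _ _ (fun k => ?_) j
        have := hd k
        have := hDxc k
        linarith
      have h17 : (C *ᵥ fun k => |u k| + 2 * (t * v k)) j
          = (C *ᵥ fun k => |u k|) j + 2 * t * ((C *ᵥ v) j) := by
        simp only [Matrix.mulVec, dotProduct, Finset.mul_sum,
          ← Finset.sum_add_distrib]
        exact Finset.sum_congr rfl fun k _ => by ring
      have h18 : 2 * t * ((C *ᵥ v) j) ≤ (2 * t * r) * v j := by
        have := mul_le_mul_of_nonneg_left (hCv j) (by positivity : (0:ℝ) ≤ 2 * t)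
        linarith
      linarith
    have h19 := haux u (2 * t * r) (by positivity) hb2
    intro j
    calc |xc j - xs j| = |u j| := rfl
      _ ≤ 2 * t * r / (1 - r) * v j := h19 j
      _ = (2 * r / (1 - r) * t) * v j := by ring
  -- part 1
  have part1 : ∀ x0 : Fin n → ℝ, ∀ xseq : ℕ → Fin n → ℝ, xseq 0 = x0 →
      (∀ i, xseq (i + 1) = (A - signDiag (xseq i))⁻¹ *ᵥ b) →
        (∀ i, IsUnit (A - signDiag (xseq i)).det) ∧ Tendsto xseq atTop (nhds xs) := by
    intro x0 xseq h0 hrec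
    refine ⟨fun i => hinv _, ?_⟩
    set q : ℝ := 2 * r / (1 - r) with hq
    have hq0 : 0 ≤ q := div_nonneg (by linarith) (le_of_lt h1r)
    have hq1 : q < 1 := by rw [hq, div_lt_one h1r]; linarith
    set t0 : ℝ := ∑ k, |x0 k - xs k| with ht0
    have ht00 : 0 ≤ t0 := Finset.sum_nonneg fun k _ => abs_nonneg _
    have hbound : ∀ i j, |xseq i j - xs j| ≤ q ^ i * t0 * v j := by
      intro i
      induction i with
      | zero =>
        intro j
        rw [pow_zero, one_mul, h0]
        calc |x0 j - xs j| ≤ t0 :=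
            Finset.single_le_sum (f := fun k => |x0 k - xs k|)
              (fun k _ => abs_nonneg _) (Finset.mem_univ j)
          _ = t0 * 1 := (mul_one t0).symm
          _ ≤ t0 * v j := mul_le_mul_of_nonneg_left (hv1 j) ht00
      | succ i ih =>
        have h20 := hstep (xseq i) (xseq (i + 1)) (hrec i) (q ^ i * t0)
          (by positivity) ih
        intro j
        calc |xseq (i + 1) j - xs j| ≤ (q * (q ^ i * t0)) * v j := h20 j
          _ = q ^ (i + 1) * t0 * v j := by ring
    rw [tendsto_pi_nhds]
    intro j
    have hqlim : Tendsto (fun i : ℕ => q ^ i * (t0 * v j)) atTop (nhds 0) := by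
      have := (tendsto_pow_atTop_nhds_zero_of_lt_one hq0 hq1).mul_const (t0 * v j)
      simpa using this
    have hup : ∀ i, xseq i j ≤ xs j + q ^ i * (t0 * v j) := by
      intro i
      have := hbound i j
      have := abs_le.1 this
      nlinarith [this.2]
    have hlo : ∀ i, xs j - q ^ i * (t0 * v j) ≤ xseq i j := by
      intro i
      have := abs_le.1 (hbound i j)
      nlinarith [this.1]
    have hupt : Tendsto (fun i : ℕ => xs j + q ^ i * (t0 * v j)) atTop (nhds (xs j)) := by
      have := tendsto_const_nhds (x := xs j) (f := atTop (α := ℕ)) |>.add hqlim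
      simpa using this
    have hlot : Tendsto (fun i : ℕ => xs j - q ^ i * (t0 * v j)) atTop (nhds (xs j)) := by
      have := tendsto_const_nhds (x := xs j) (f := atTop (α := ℕ)) |>.sub hqlim
      simpa using this
    exact tendsto_of_tendsto_of_tendsto_of_le_of_le hlot hupt hlo hup
  refine ⟨part1, ?_⟩
  intro y hy
  have hyfix : y = (A - signDiag y)⁻¹ *ᵥ b := by
    have hDy : signDiag y *ᵥ y = fun j => |y j| := by
      funext j
      rw [signDiag, Matrix.mulVec_diagonal]
      exact sign_mul_self_eq_abs _
    have h21 : (A - signDiag y) *ᵥ y = b := by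
      rw [Matrix.sub_mulVec, hDy, ← hy]
    rw [← h21, Matrix.mulVec_mulVec, Matrix.nonsing_inv_mul _ (hinv y), Matrix.one_mulVec]
  obtain ⟨-, htend⟩ := part1 y (fun _ => y) rfl (fun i => hyfix)
  exact tendsto_nhds_unique (tendsto_const_nhds (x := y) (f := atTop (α := ℕ))) htend
end

section
/- Let A be an invertible n×n real matrix, b ∈ ℝⁿ, x* a solution of Ax - |x| = b, and suppose x ∈ ℝⁿ is such that A - D(x) is invertible. Then entrywise, |(A - D(x))^{-1} b - x*| ≤ |(A - D(x))^{-1}| · 2|x - x*|. -/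
open Matrix

lemma sign_mul_sub_abs_le (a t : ℝ) : |(Real.sign a * t - |t|)| ≤ 2 * |a - t| := by
  rcases lt_trichotomy a 0 with h | h | h
  · rw [Real.sign_of_neg h]
    rcases le_or_gt t 0 with ht | ht
    · rw [abs_of_nonpos ht]; ring_nf; simp
    · rw [abs_of_pos ht]
      have : |a - t| = t - a := by rw [abs_of_neg (by linarith)]; ring
      rw [this]
      rw [abs_of_nonpos (by linarith)]
      linarith
  · simp [h, Real.sign_zero, abs_abs, abs_sub_comm]
    linarith [abs_nonneg t]
  · rw [Real.sign_of_pos h]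
    rcases le_or_gt 0 t with ht | ht
    · rw [abs_of_nonneg ht]; simp [abs_nonneg]
    · rw [abs_of_neg ht]
      have : |a - t| = a - t := abs_of_pos (by linarith)
      rw [this, abs_of_nonpos (by linarith)]
      linarith

theorem stmt_6 {n : ℕ} (A : Matrix (Fin n) (Fin n) ℝ) (hA : IsUnit A.det)
    (b xs x : Fin n → ℝ) (hxs : A *ᵥ xs - (fun j => |xs j|) = b)
    (hinv : IsUnit (A - signDiag x).det) :
    ∀ j, |((A - signDiag x)⁻¹ *ᵥ b) j - xs j| ≤
      ((Matrix.of fun i k => |(A - signDiag x)⁻¹ i k|) *ᵥ fun k => 2 * |x k - xs k|) j := by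
  intro j
  set M := A - signDiag x with hM
  have hMx : M⁻¹ *ᵥ (M *ᵥ xs) = xs := by
    rw [Matrix.mulVec_mulVec, Matrix.nonsing_inv_mul M hinv, Matrix.one_mulVec]
  have key : M⁻¹ *ᵥ b - xs = M⁻¹ *ᵥ (fun k => Real.sign (x k) * xs k - |xs k|) := by
    have : b - M *ᵥ xs = fun k => Real.sign (x k) * xs k - |xs k| := by
      funext k
      have hb : b k = (A *ᵥ xs) k - |xs k| := by rw [← hxs]; rfl
      have hMv : (M *ᵥ xs) k = (A *ᵥ xs) k - Real.sign (x k) * xs k := by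
        simp [hM, signDiag, Matrix.sub_mulVec, Matrix.mulVec_diagonal]
      simp only [Pi.sub_apply, hb, hMv]
      ring
    rw [← this, Matrix.mulVec_sub, hMx]
  have hj : (M⁻¹ *ᵥ b) j - xs j = ∑ k, M⁻¹ j k * (Real.sign (x k) * xs k - |xs k|) := by
    have := congrFun key j
    simpa [Matrix.mulVec, dotProduct] using this
  rw [hj]
  calc |∑ k, M⁻¹ j k * (Real.sign (x k) * xs k - |xs k|)|
      ≤ ∑ k, |M⁻¹ j k * (Real.sign (x k) * xs k - |xs k|)| := Finset.abs_sum_le_sum_abs _ _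
    _ ≤ ∑ k, |M⁻¹ j k| * (2 * |x k - xs k|) := by
        apply Finset.sum_le_sum
        intro k _
        rw [abs_mul]
        exact mul_le_mul_of_nonneg_left (sign_mul_sub_abs_le _ _) (abs_nonneg _)
    _ = _ := by simp [Matrix.mulVec, dotProduct]
end

section
/- Let A be the n×n upper triangular matrix with 1's on the diagonal and -1's in every entry strictly above the diagonal. Then A^{-1} is the upper triangular matrix with (A^{-1})_{jj} = 1, (A^{-1})_{j,j+1} = 1, and (A^{-1})_{jk} = 2^{k-j-1} for k > j+1; consequently ρ(|A^{-1}|) ≥ 1 and ‖A^{-1}‖₂ > 2^{n-2} for n ≥ 2. -/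
open Matrix
open scoped Matrix.Norms.L2Operator
set_option maxHeartbeats 1000000

private lemma geo : ∀ d : ℕ, ∑ m ∈ Finset.range (d + 1), (2:ℝ) ^ (d - 1 - m) = 2 ^ d := by
  intro d
  induction d with
  | zero => simp
  | succ d ih =>
    rw [Finset.sum_range_succ']
    have h1 : ∑ m ∈ Finset.range (d + 1), (2:ℝ) ^ (d + 1 - 1 - (m + 1)) =
        ∑ m ∈ Finset.range (d + 1), (2:ℝ) ^ (d - 1 - m) := by
      refine Finset.sum_congr rfl fun m hm => ?_; congr 1; omega
    rw [h1, ih]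
    have h2 : d + 1 - 1 - 0 = d := by omega
    rw [h2]; ring

theorem stmt_8 {n : ℕ} (A : Matrix (Fin n) (Fin n) ℝ)
    (hA : A = Matrix.of fun i j : Fin n =>
      if i = j then (1 : ℝ) else if i < j then -1 else 0) :
    (∀ j, A⁻¹ j j = 1) ∧
    (∀ j k : Fin n, (j : ℕ) + 1 = (k : ℕ) → A⁻¹ j k = 1) ∧
    (∀ j k : Fin n, (j : ℕ) + 1 < (k : ℕ) → A⁻¹ j k = 2 ^ ((k : ℕ) - (j : ℕ) - 1)) ∧
    (∀ j k : Fin n, (k : ℕ) < (j : ℕ) → A⁻¹ j k = 0) ∧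
    (1 ≤ n → 1 ≤ specRad (Matrix.of fun i j => |A⁻¹ i j|)) ∧
    (2 ≤ n → (2 : ℝ) ^ (n - 2) < ‖A⁻¹‖) := by
  set B : Matrix (Fin n) (Fin n) ℝ :=
    Matrix.of (fun j k : Fin n => if (j : ℕ) ≤ (k : ℕ) then (2:ℝ) ^ ((k : ℕ) - j - 1) else 0)
    with hBdef
  have hAB : A * B = 1 := by
    ext i k
    have hsum : ∀ j : Fin n, A i j * B j k =
        (if j = i then B i k else 0) + (if i < j then -(B j k) else 0) := by
      intro j
      rcases lt_trichotomy i j with h | h | h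
      · rw [hA]; simp only [Matrix.of_apply]
        rw [if_neg h.ne, if_pos h, if_neg h.ne', if_pos h]; ring
      · rw [hA, h]; simp [lt_irrefl]
      · rw [hA]; simp only [Matrix.of_apply]
        rw [if_neg h.ne', if_neg (asymm h), if_neg h.ne, if_neg (asymm h)]; ring
    rw [Matrix.mul_apply]
    rw [Finset.sum_congr rfl (fun j _ => hsum j), Finset.sum_add_distrib,
      Finset.sum_ite_eq' Finset.univ i (fun _ => B i k)]
    simp only [Finset.mem_univ, if_true]
    have hneg : (∑ j : Fin n, if i < j then -(B j k) else 0) =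
        -(∑ j : Fin n, if i < j then B j k else 0) := by
      rw [← Finset.sum_neg_distrib]
      refine Finset.sum_congr rfl fun j _ => ?_
      split_ifs <;> simp
    rw [hneg]
    set g : ℕ → ℝ :=
      fun m => if (i : ℕ) < m ∧ m ≤ (k : ℕ) then (2:ℝ) ^ ((k : ℕ) - m - 1) else 0 with hg
    have hS : (∑ j : Fin n, if i < j then B j k else 0) =
        ∑ m ∈ Finset.Ioc (i : ℕ) (k : ℕ), (2:ℝ) ^ ((k : ℕ) - m - 1) := by
      have h1 : ∀ j : Fin n, (if i < j then B j k else 0) = g (j : ℕ) := by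
        intro j
        have hg' : g (j : ℕ) =
            if (i : ℕ) < (j : ℕ) ∧ (j : ℕ) ≤ (k : ℕ) then (2:ℝ) ^ ((k : ℕ) - (j : ℕ) - 1)
            else 0 := rfl
        rw [hg']
        by_cases hij : i < j
        · have hij' : (i : ℕ) < (j : ℕ) := hij
          rw [if_pos hij, hBdef]
          simp only [Matrix.of_apply]
          by_cases hjk : (j : ℕ) ≤ (k : ℕ)
          · rw [if_pos hjk, if_pos ⟨hij', hjk⟩]
          · rw [if_neg hjk, if_neg (fun hc => hjk hc.2)]
        · have hij' : ¬ (i : ℕ) < (j : ℕ) := fun hc => hij hc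
          rw [if_neg hij, if_neg (fun hc => absurd hc.1 hij')]
      calc (∑ j : Fin n, if i < j then B j k else 0)
          = ∑ j : Fin n, g (j : ℕ) := Finset.sum_congr rfl fun j _ => h1 j
        _ = ∑ m ∈ Finset.range n, g m := Fin.sum_univ_eq_sum_range g n
        _ = ∑ m ∈ Finset.Ioc (i : ℕ) (k : ℕ), (2:ℝ) ^ ((k : ℕ) - m - 1) := by
            rw [hg]
            rw [← Finset.sum_filter]
            congr 1
            ext m
            simp only [Finset.mem_filter, Finset.mem_range, Finset.mem_Ioc]
            constructor
            · rintro ⟨-, h⟩; exact h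
            · rintro ⟨h1, h2⟩; exact ⟨lt_of_le_of_lt h2 k.isLt, h1, h2⟩
    rw [hS]
    rcases lt_trichotomy (i : ℕ) (k : ℕ) with h | h | h
    · have hIoc : Finset.Ioc (i : ℕ) (k : ℕ) = Finset.Ico ((i : ℕ) + 1) ((k : ℕ) + 1) := by
        ext m; simp only [Finset.mem_Ioc, Finset.mem_Ico]; omega
      have hsum2 : (∑ m ∈ Finset.Ioc (i : ℕ) (k : ℕ), (2:ℝ) ^ ((k : ℕ) - m - 1)) =
          2 ^ ((k : ℕ) - (i : ℕ) - 1) := by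
        rw [hIoc, Finset.sum_Ico_eq_sum_range]
        have h2 : (k : ℕ) + 1 - ((i : ℕ) + 1) = ((k : ℕ) - (i : ℕ) - 1) + 1 := by omega
        rw [h2, ← geo ((k : ℕ) - (i : ℕ) - 1)]
        refine Finset.sum_congr rfl fun m hm => ?_
        congr 1; omega
      rw [hsum2]
      have hik : i ≠ k := by intro hh; rw [hh] at h; omega
      rw [Matrix.one_apply_ne hik, hBdef]
      simp only [Matrix.of_apply]
      rw [if_pos (show (i : ℕ) ≤ (k : ℕ) from h.le)]
      ring
    · have hik : i = k := Fin.ext h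
      simp [hBdef, Matrix.one_apply, hik]
    · have hik : i ≠ k := by intro hh; rw [hh] at h; omega
      have hIoc : Finset.Ioc (i : ℕ) (k : ℕ) = ∅ := by
        rw [Finset.Ioc_eq_empty]; omega
      rw [hIoc, Finset.sum_empty, Matrix.one_apply_ne hik, hBdef]
      simp only [Matrix.of_apply]
      rw [if_neg (show ¬((i : ℕ) ≤ (k : ℕ)) by omega)]
      ring
  have hInv : A⁻¹ = B := Matrix.inv_eq_right_inv hAB
  refine ⟨?_, ?_, ?_, ?_, ?_, ?_⟩
  · intro j; simp [hInv, hBdef]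
  · intro j k h
    have h0 : (k : ℕ) - j - 1 = 0 := by omega
    rw [hInv, hBdef]
    simp only [Matrix.of_apply]
    rw [if_pos (show (j : ℕ) ≤ (k : ℕ) by omega), h0, pow_zero]
  · intro j k h
    rw [hInv, hBdef]
    simp only [Matrix.of_apply]
    rw [if_pos (show (j : ℕ) ≤ (k : ℕ) by omega)]
  · intro j k h
    rw [hInv, hBdef]
    simp only [Matrix.of_apply]
    rw [if_neg (show ¬((j : ℕ) ≤ (k : ℕ)) by omega)]
  · intro hn
    set M : Matrix (Fin n) (Fin n) ℝ := Matrix.of fun i j => |A⁻¹ i j| with hM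
    set C : Matrix (Fin n) (Fin n) ℂ := M.map (Complex.ofReal ·) with hC
    have h1spec : (1 : ℂ) ∈ spectrum ℂ C := by
      rw [spectrum.mem_iff]
      intro hU
      rw [_root_.map_one, Matrix.isUnit_iff_isUnit_det] at hU
      have htri : ((1 : Matrix (Fin n) (Fin n) ℂ) - C).BlockTriangular id := by
        intro a b hab
        have hba : (b : ℕ) < (a : ℕ) := hab
        have hBab : A⁻¹ a b = 0 := by
          rw [hInv, hBdef]
          simp only [Matrix.of_apply]
          rw [if_neg (show ¬((a : ℕ) ≤ (b : ℕ)) by omega)]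
        have hne : a ≠ b := by intro hh; rw [hh] at hba; omega
        simp [hC, hM, Matrix.one_apply_ne hne, hBab]
      have hdet : ((1 : Matrix (Fin n) (Fin n) ℂ) - C).det = 0 := by
        rw [Matrix.det_of_upperTriangular htri]
        refine Finset.prod_eq_zero (Finset.mem_univ (⟨0, by omega⟩ : Fin n)) ?_
        have hB00 : A⁻¹ (⟨0, by omega⟩ : Fin n) (⟨0, by omega⟩ : Fin n) = 1 := by
          simp [hInv, hBdef]
        simp [hC, hM, Matrix.one_apply, hB00]
      rw [hdet] at hU
      exact not_isUnit_zero hU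
    have hbdd : BddAbove (Set.range fun μ : spectrum ℂ C => ‖(μ : ℂ)‖) := by
      have : Finite (spectrum ℂ C) := Matrix.instFiniteSpectrum C
      exact (Set.finite_range _).bddAbove
    have := le_ciSup hbdd (⟨1, h1spec⟩ : spectrum ℂ C)
    simpa [specRad, ← hC] using this
  · intro hn
    set kf : Fin n := ⟨n - 1, by omega⟩ with hkf
    set i0 : Fin n := ⟨0, by omega⟩ with hi0
    have hne : i0 ≠ kf := by
      intro h; rw [Fin.ext_iff] at h; simp [hi0, hkf] at h; omega
    set x : EuclideanSpace ℝ (Fin n) := EuclideanSpace.single kf 1 with hx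
    have hxn : ‖x‖ = 1 := by simp [hx, EuclideanSpace.norm_single]
    have hle : ‖(EuclideanSpace.equiv (Fin n) ℝ).symm (A⁻¹ *ᵥ x)‖ ≤ ‖A⁻¹‖ := by
      have := Matrix.l2_opNorm_mulVec A⁻¹ x
      rwa [hxn, mul_one] at this
    refine lt_of_lt_of_le ?_ hle
    have hxfun : (x : Fin n → ℝ) = Pi.single kf 1 := rfl
    have hcol : ∀ i1 : Fin n, ((EuclideanSpace.equiv (Fin n) ℝ).symm (A⁻¹ *ᵥ x)) i1
        = A⁻¹ i1 kf := by
      intro i1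
      show (A⁻¹ *ᵥ x) i1 = A⁻¹ i1 kf
      rw [show (x : Fin n → ℝ) = Pi.single kf 1 from rfl, Matrix.mulVec_single]
      simp
    rw [EuclideanSpace.norm_eq]
    have hsq : ((2:ℝ) ^ (n - 2)) ^ 2 < ∑ i1 : Fin n,
        ‖((EuclideanSpace.equiv (Fin n) ℝ).symm (A⁻¹ *ᵥ x)) i1‖ ^ 2 := by
      have hsub : ({i0, kf} : Finset (Fin n)) ⊆ Finset.univ := Finset.subset_univ _
      have hnn : ∀ i1 ∈ Finset.univ \ ({i0, kf} : Finset (Fin n)),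
          (0:ℝ) ≤ ‖((EuclideanSpace.equiv (Fin n) ℝ).symm (A⁻¹ *ᵥ x)) i1‖ ^ 2 := by
        intro i1 _; positivity
      have hge := Finset.sum_le_sum_of_subset_of_nonneg hsub (fun i1 _ hi1 => hnn i1 (by
        simp only [Finset.mem_sdiff]; exact ⟨Finset.mem_univ _, hi1⟩))
      refine lt_of_lt_of_le ?_ hge
      rw [Finset.sum_pair hne]
      have h1 : A⁻¹ i0 kf = 2 ^ (n - 2) := by
        simp only [hInv, hBdef, Matrix.of_apply, hi0, hkf, Fin.val_mk]
        rw [if_pos (by omega)]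
        congr 1
      have h2 : A⁻¹ kf kf = 1 := by simp [hInv, hBdef]
      rw [hcol i0, hcol kf, h1, h2]
      have hnrm : ‖(2:ℝ) ^ (n - 2)‖ = (2:ℝ) ^ (n - 2) := by
        rw [Real.norm_eq_abs]; exact abs_of_nonneg (by positivity)
      rw [hnrm]
      simp
    calc (2:ℝ) ^ (n - 2) = Real.sqrt (((2:ℝ) ^ (n - 2)) ^ 2) := by
          rw [Real.sqrt_sq (by positivity)]
      _ < _ := Real.sqrt_lt_sqrt (by positivity) hsq
end

section
/- Let A be an n×n real matrix such that A - I is a singular M-matrix. If A - I + diag(d) is nonsingular for every d ∈ ℝⁿ with d ≥ 0 and d ≠ 0, then A - I is irreducible. -/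
open Matrix

/-- `M` is a nonsingular M-matrix: `M = s•I - B` with `B ≥ 0` and `s > ρ(B)`. -/
def IsNonsingMMatrix {n : ℕ} (M : Matrix (Fin n) (Fin n) ℝ) : Prop :=
  ∃ (s : ℝ) (B : Matrix (Fin n) (Fin n) ℝ),
    (∀ i j, 0 ≤ B i j) ∧ M = s • (1 : Matrix (Fin n) (Fin n) ℝ) - B ∧ specRad B < s

/-- `M` is a singular M-matrix: `M = s•I - B` with `B ≥ 0` and `s = ρ(B)`. -/
def IsSingMMatrix {n : ℕ} (M : Matrix (Fin n) (Fin n) ℝ) : Prop :=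
  ∃ (s : ℝ) (B : Matrix (Fin n) (Fin n) ℝ),
    (∀ i j, 0 ≤ B i j) ∧ M = s • (1 : Matrix (Fin n) (Fin n) ℝ) - B ∧ specRad B = s

/-- `M` is reducible: some symmetric permutation of `M` is block upper triangular
with two nonempty square diagonal blocks. -/
def IsReducibleM {n : ℕ} (M : Matrix (Fin n) (Fin n) ℝ) : Prop :=
  ∃ (m : ℕ) (e : Equiv.Perm (Fin n)), 0 < m ∧ m < n ∧
    ∀ i j : Fin n, m ≤ (i : ℕ) → (j : ℕ) < m → M (e i) (e j) = 0

open Filter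

section ComplexNormedAlgebra

attribute [local instance] Matrix.linftyOpNormedAddCommGroup Matrix.linftyOpNormedSpace
  Matrix.linftyOpNormedRing Matrix.linftyOpNormedAlgebra

private instance {n : ℕ} : CompleteSpace (Matrix (Fin n) (Fin n) ℂ) :=
  FiniteDimensional.complete ℂ _

variable {n : ℕ}

private lemma specRad_attained (hn : 0 < n) (B : Matrix (Fin n) (Fin n) ℝ) :
    ∃ μ ∈ spectrum ℂ (B.map (Complex.ofReal ·)),
      ‖μ‖ = specRad B ∧
      (spectralRadius ℂ (B.map (Complex.ofReal ·))).toReal = specRad B := by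
  have : Nonempty (Fin n) := Fin.pos_iff_nonempty.mp hn
  set Bc := B.map (Complex.ofReal ·) with hBc
  obtain ⟨z, hz, hz2⟩ := spectrum.exists_nnnorm_eq_spectralRadius (a := Bc)
  have hfin : (spectrum ℂ Bc).Finite := Matrix.finite_spectrum Bc
  have hbdd : BddAbove (Set.range fun μ : spectrum ℂ Bc => ‖(μ : ℂ)‖) := by
    have : Finite (spectrum ℂ Bc) := hfin
    exact (Set.finite_range _).bddAbove
  have hmax : ∀ ν ∈ spectrum ℂ Bc, ‖ν‖ ≤ ‖z‖ := by
    intro ν hν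
    have h1 : (‖ν‖₊ : ENNReal) ≤ spectralRadius ℂ Bc :=
      le_iSup₂ (f := fun k (_ : k ∈ spectrum ℂ Bc) => (‖k‖₊ : ENNReal)) ν hν
    rw [← hz2, ENNReal.coe_le_coe] at h1
    exact NNReal.coe_le_coe.mpr h1
  have heq : ‖z‖ = specRad B := by
    refine le_antisymm ?_ ?_
    · exact le_ciSup hbdd (⟨z, hz⟩ : spectrum ℂ Bc)
    · have : Nonempty (spectrum ℂ Bc) := ⟨⟨z, hz⟩⟩
      exact ciSup_le fun ν => hmax ν ν.2
  refine ⟨z, hz, heq, ?_⟩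
  rw [← hz2]
  simpa using heq

private lemma resolvent_nonneg (hn : 0 < n) {B : Matrix (Fin n) (Fin n) ℝ} (hB : ∀ i j, 0 ≤ B i j)
    {t : ℝ} (ht : specRad B < t) :
    IsUnit (t • (1 : Matrix (Fin n) (Fin n) ℝ) - B).det ∧
      ∀ i j, 0 ≤ ((t • (1 : Matrix (Fin n) (Fin n) ℝ) - B)⁻¹) i j := by
  obtain ⟨z, hz, habs, htr⟩ := specRad_attained hn B
  set s := specRad B with hsdef
  have hs0 : 0 ≤ s := habs ▸ norm_nonneg z
  have ht0 : 0 < t := lt_of_le_of_lt hs0 ht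
  set a := B.map (Complex.ofReal ·) with ha
  set t' := (s + t) / 2 with ht'def
  have hst' : s < t' := by simp [ht'def]; linarith
  have ht't : t' < t := by simp [ht'def]; linarith
  have ht'0 : 0 < t' := lt_of_le_of_lt hs0 hst'
  -- Gelfand
  have hG : Tendsto (fun k : ℕ => ENNReal.ofReal (‖a ^ k‖ ^ (1 / (k : ℝ)))) atTop
      (nhds (spectralRadius ℂ a)) := spectrum.pow_norm_pow_one_div_tendsto_nhds_spectralRadius a
  have hlt : spectralRadius ℂ a < ENNReal.ofReal t' := by
    have : Nonempty (Fin n) := Fin.pos_iff_nonempty.mp hn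
    have hne : spectralRadius ℂ a ≠ ⊤ :=
      ne_top_of_le_ne_top ENNReal.coe_ne_top (spectrum.spectralRadius_le_nnnorm a)
    rw [← ENNReal.ofReal_toReal hne, htr]
    exact (ENNReal.ofReal_lt_ofReal_iff ht'0).mpr hst'
  have hev : ∀ᶠ k : ℕ in atTop, ‖a ^ k‖ ^ (1 / (k : ℝ)) < t' := by
    have := hG.eventually_lt_const hlt
    filter_upwards [this] with k hk
    rw [ENNReal.ofReal_lt_ofReal_iff ht'0] at hk
    exact hk
  have hpow : ∀ᶠ k : ℕ in atTop, ‖a ^ k‖ ≤ t' ^ k := by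
    filter_upwards [hev, eventually_ge_atTop 1] with k hk hk1
    have hk0 : (k : ℕ) ≠ 0 := by omega
    have h1 : ‖a ^ k‖ = (‖a ^ k‖ ^ (1 / (k : ℝ))) ^ k := by
      rw [one_div, Real.rpow_inv_natCast_pow (norm_nonneg _) hk0]
    rw [h1]
    exact pow_le_pow_left₀ (Real.rpow_nonneg (norm_nonneg _) _) (le_of_lt hk) k
  -- series setup
  set u : ℕ → Matrix (Fin n) (Fin n) ℂ := fun k => ((t : ℂ)⁻¹) ^ (k + 1) • a ^ k with hu
  set v : ℕ → Matrix (Fin n) (Fin n) ℂ := fun k => ((t : ℂ)⁻¹) ^ k • a ^ k with hv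
  have htne : (t : ℂ) ≠ 0 := by exact_mod_cast ne_of_gt ht0
  have hnormc : ‖(t : ℂ)⁻¹‖ = 1 / t := by
    rw [norm_inv, Complex.norm_real, Real.norm_eq_abs, abs_of_pos ht0, one_div]
  have hnorm_u : ∀ᶠ k : ℕ in atTop, ‖u k‖ ≤ (1 / t) * (t' / t) ^ k := by
    filter_upwards [hpow] with k hk
    have heq : (1 / t) * (t' / t) ^ k = (1/t) ^ (k+1) * t' ^ k := by
      rw [div_pow, pow_succ]; ring
    rw [heq, hu]
    simp only [norm_smul, norm_pow, hnormc]
    exact mul_le_mul_of_nonneg_left hk (by positivity)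
  have hgeo : Summable (fun k : ℕ => (1 / t) * (t' / t) ^ k) :=
    (summable_geometric_of_lt_one (by positivity) (by rw [div_lt_one ht0]; exact ht't)).mul_left _
  have hsum : Summable u :=
    Summable.of_norm_bounded_eventually hgeo (by rw [Nat.cofinite_eq_atTop]; exact hnorm_u)
  set S := ∑' k, u k with hSdef
  have hS : HasSum u S := hsum.hasSum
  have hv0 : v 0 = 1 := by simp [hv]
  have htel : ∀ k, ((t : ℂ) • (1 : Matrix (Fin n) (Fin n) ℂ) - a) * u k = v k - v (k + 1) := by
    intro k
    simp only [hu, hv]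
    rw [sub_mul, smul_mul_assoc, one_mul, mul_smul_comm, ← pow_succ', smul_smul,
      pow_succ' ((t : ℂ)⁻¹) k, ← mul_assoc, mul_inv_cancel₀ htne, one_mul]
  have htel' : ∀ k, u k * ((t : ℂ) • (1 : Matrix (Fin n) (Fin n) ℂ) - a) = v k - v (k + 1) := by
    intro k
    simp only [hu, hv]
    rw [smul_mul_assoc, mul_sub, mul_smul_comm, mul_one, ← pow_succ, smul_sub, smul_smul,
      pow_succ ((t : ℂ)⁻¹) k, mul_assoc, inv_mul_cancel₀ htne, mul_one]
  have hvN : Tendsto v atTop (nhds 0) := by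
    refine squeeze_zero_norm' ?_ (tendsto_pow_atTop_nhds_zero_of_lt_one (r := t'/t) (by positivity)
      (by rw [div_lt_one ht0]; exact ht't))
    filter_upwards [hpow] with k hk
    rw [hv]
    simp only [norm_smul, norm_pow, hnormc]
    calc (1/t) ^ k * ‖a ^ k‖ ≤ (1/t) ^ k * t' ^ k :=
          mul_le_mul_of_nonneg_left hk (by positivity)
      _ = (t'/t) ^ k := by rw [← mul_pow]; congr 1; ring
  -- left and right inverse identities
  have hpartial : ∀ N : ℕ, ∑ k ∈ Finset.range N, (v k - v (k+1)) = 1 - v N := by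
    intro N
    rw [Finset.sum_range_sub' v N, hv0]
  have hleft : ((t : ℂ) • (1 : Matrix (Fin n) (Fin n) ℂ) - a) * S = 1 := by
    have h1 : Tendsto (fun N => ((t : ℂ) • (1 : Matrix (Fin n) (Fin n) ℂ) - a) *
        ∑ k ∈ Finset.range N, u k) atTop
        (nhds (((t : ℂ) • (1 : Matrix (Fin n) (Fin n) ℂ) - a) * S)) :=
      hS.tendsto_sum_nat.const_mul _
    have h2 : (fun N => ((t : ℂ) • (1 : Matrix (Fin n) (Fin n) ℂ) - a) *
        ∑ k ∈ Finset.range N, u k) = fun N => 1 - v N := by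
      funext N
      rw [Finset.mul_sum]
      simp_rw [htel]
      exact hpartial N
    rw [h2] at h1
    have h3 : Tendsto (fun N => 1 - v N) atTop
        (nhds (1 : Matrix (Fin n) (Fin n) ℂ)) := by
      simpa using tendsto_const_nhds.sub hvN
    exact tendsto_nhds_unique h1 h3
  have hright : S * ((t : ℂ) • (1 : Matrix (Fin n) (Fin n) ℂ) - a) = 1 := by
    have h1 : Tendsto (fun N => (∑ k ∈ Finset.range N, u k) *
        ((t : ℂ) • (1 : Matrix (Fin n) (Fin n) ℂ) - a)) atTop
        (nhds (S * ((t : ℂ) • (1 : Matrix (Fin n) (Fin n) ℂ) - a))) :=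
      hS.tendsto_sum_nat.mul_const _
    have h2 : (fun N => (∑ k ∈ Finset.range N, u k) *
        ((t : ℂ) • (1 : Matrix (Fin n) (Fin n) ℂ) - a)) = fun N => 1 - v N := by
      funext N
      rw [Finset.sum_mul]
      simp_rw [htel']
      exact hpartial N
    rw [h2] at h1
    have h3 : Tendsto (fun N => 1 - v N) atTop
        (nhds (1 : Matrix (Fin n) (Fin n) ℂ)) := by
      simpa using tendsto_const_nhds.sub hvN
    exact tendsto_nhds_unique h1 h3
  -- transfer to ℝ
  set Mt := t • (1 : Matrix (Fin n) (Fin n) ℝ) - B with hMt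
  have hmap : Mt.map (Complex.ofReal ·) = (t : ℂ) • (1 : Matrix (Fin n) (Fin n) ℂ) - a := by
    ext i j
    by_cases hij : i = j <;>
      simp [hMt, ha, Matrix.map_apply, Matrix.one_apply, hij]
  have hcoe : ∀ (M : Matrix (Fin n) (Fin n) ℝ),
      M.map (Complex.ofReal ·) = Complex.ofRealHom.mapMatrix M := fun _ => rfl
  have hdetc : (Mt.map (Complex.ofReal ·)).det = ((Mt.det : ℝ) : ℂ) := by
    rw [hcoe, ← RingHom.map_det]
    rfl
  have hUc : IsUnit ((t : ℂ) • (1 : Matrix (Fin n) (Fin n) ℂ) - a) :=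
    ⟨⟨_, S, hleft, hright⟩, rfl⟩
  have hdetR : IsUnit Mt.det := by
    have := (Matrix.isUnit_iff_isUnit_det _).mp hUc
    rw [← hmap, hdetc] at this
    have hne : (Mt.det : ℂ) ≠ 0 := this.ne_zero
    exact isUnit_iff_ne_zero.mpr (by exact_mod_cast hne)
  refine ⟨hdetR, ?_⟩
  -- the inverse equals S
  have hinvmap : Mt⁻¹.map (Complex.ofReal ·) = S := by
    have hMN : (Complex.ofRealHom.mapMatrix Mt) * (Complex.ofRealHom.mapMatrix Mt⁻¹) = 1 := by
      rw [← _root_.map_mul, Matrix.mul_nonsing_inv _ hdetR, _root_.map_one]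
    have h1 : ((t : ℂ) • (1 : Matrix (Fin n) (Fin n) ℂ) - a) *
        (Complex.ofRealHom.mapMatrix Mt⁻¹) = 1 := by
      rw [← hmap, hcoe]; exact hMN
    calc Mt⁻¹.map (Complex.ofReal ·) = Complex.ofRealHom.mapMatrix Mt⁻¹ := rfl
      _ = (S * ((t : ℂ) • (1 : Matrix (Fin n) (Fin n) ℂ) - a)) *
            Complex.ofRealHom.mapMatrix Mt⁻¹ := by rw [hright, one_mul]
      _ = S * (((t : ℂ) • (1 : Matrix (Fin n) (Fin n) ℂ) - a) *
            Complex.ofRealHom.mapMatrix Mt⁻¹) := mul_assoc _ _ _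
      _ = S := by rw [h1, mul_one]
  -- entrywise nonnegativity
  intro i j
  have hBk : ∀ k : ℕ, ∀ i j, 0 ≤ (B ^ k) i j := by
    intro k
    induction k with
    | zero => intro i j; by_cases hij : i = j <;> simp [Matrix.one_apply, hij]
    | succ k ih =>
        intro i j
        rw [pow_succ, Matrix.mul_apply]
        exact Finset.sum_nonneg fun l _ => mul_nonneg (ih i l) (hB l j)
  have hak : ∀ k : ℕ, a ^ k = (B ^ k).map (Complex.ofReal ·) := by
    intro k
    rw [ha, hcoe, hcoe, ← map_pow]
  have hentry : HasSum (fun k => u k i j) (S i j) := by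
    have hcont : Continuous (fun M : Matrix (Fin n) (Fin n) ℂ => M i j) :=
      (Matrix.entryLinearMap ℂ ℂ i j).continuous_of_finiteDimensional
    exact hS.map (Matrix.entryLinearMap ℂ ℂ i j).toAddMonoidHom hcont
  set w : ℕ → ℝ := fun k => (t⁻¹) ^ (k + 1) * (B ^ k) i j with hw
  have huw : ∀ k, u k i j = ((w k : ℝ) : ℂ) := by
    intro k
    rw [hu, hw]
    simp [hak, Matrix.map_apply, Matrix.smul_apply, smul_eq_mul,
      Complex.ofReal_mul, Complex.ofReal_pow, Complex.ofReal_inv]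
  have hre : HasSum w ((S i j).re) := by
    have := hentry.mapL Complex.reCLM
    simpa [huw] using this
  have hre0 : 0 ≤ (S i j).re :=
    hre.nonneg fun k => mul_nonneg (by positivity) (hBk k i j)
  have him : (S i j).im = 0 := by
    have := hentry.mapL Complex.imCLM
    have h0 : HasSum (fun k : ℕ => (0 : ℝ)) ((S i j).im) := by
      simpa [huw] using this
    exact (hasSum_zero.unique h0).symm
  have : ((Mt⁻¹ i j : ℝ) : ℂ) = S i j := by
    rw [← hinvmap]; rfl
  have : Mt⁻¹ i j = (S i j).re := by
    rw [← this, Complex.ofReal_re]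
  rw [this]
  exact hre0

end ComplexNormedAlgebra

variable {n : ℕ}

private lemma singular_at_specRad (hn : 0 < n) {B : Matrix (Fin n) (Fin n) ℝ}
    (hB : ∀ i j, 0 ≤ B i j) :
    ¬ IsUnit (specRad B • (1 : Matrix (Fin n) (Fin n) ℝ) - B).det := by
  intro hdet
  set s := specRad B with hsdef
  set Bc := B.map (Complex.ofReal ·) with hBc
  obtain ⟨μ, hμ, habs, -⟩ := specRad_attained hn B
  -- eigenvector for μ
  have hdet0 : (μ • (1 : Matrix (Fin n) (Fin n) ℂ) - Bc).det = 0 := by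
    have hnu : ¬ IsUnit (algebraMap ℂ (Matrix (Fin n) (Fin n) ℂ) μ - Bc) :=
      spectrum.mem_iff.mp hμ
    rw [Algebra.algebraMap_eq_smul_one] at hnu
    by_contra hne
    exact hnu ((Matrix.isUnit_iff_isUnit_det _).mpr (isUnit_iff_ne_zero.mpr hne))
  obtain ⟨x, hx0, hxeq⟩ := Matrix.exists_mulVec_eq_zero_iff.mpr hdet0
  have heig : Bc.mulVec x = μ • x := by
    have := hxeq
    rw [Matrix.sub_mulVec, Matrix.smul_mulVec, Matrix.one_mulVec, sub_eq_zero] at this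
    exact this.symm
  set y : Fin n → ℝ := fun i => ‖x i‖ with hy
  have hy0 : ∀ i, 0 ≤ y i := fun i => norm_nonneg _
  have hyne : y ≠ 0 := by
    intro hcon
    apply hx0
    funext i
    have : y i = 0 := congrFun hcon i
    simpa [hy, map_eq_zero] using this
  have hkey : ∀ i, s * y i ≤ B.mulVec y i := by
    intro i
    have h1 : s * y i = ‖(Bc.mulVec x) i‖ := by
      rw [heig]
      simp only [Pi.smul_apply, smul_eq_mul, norm_mul, hy, habs, hsdef]
    have h2 : ‖(Bc.mulVec x) i‖ ≤ ∑ j, B i j * y j := by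
      simp only [Matrix.mulVec, dotProduct]
      refine le_trans (norm_sum_le _ _) (le_of_eq (Finset.sum_congr rfl fun j _ => ?_))
      rw [norm_mul, hBc]
      simp [Matrix.map_apply, Complex.norm_real, Real.norm_eq_abs, abs_of_nonneg (hB i j), hy]
    rw [h1]
    refine le_trans h2 (le_of_eq ?_)
    simp only [Matrix.mulVec, dotProduct]
  -- nonnegativity of the inverse at s, by limits from the right
  have hP : ∀ i j, 0 ≤ ((s • (1 : Matrix (Fin n) (Fin n) ℝ) - B)⁻¹) i j := by
    intro i j
    set g : ℝ → ℝ := fun r =>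
      ((r • (1 : Matrix (Fin n) (Fin n) ℝ) - B).det)⁻¹ *
        ((r • (1 : Matrix (Fin n) (Fin n) ℝ) - B).adjugate i j) with hg
    have hMcont : Continuous (fun r : ℝ => r • (1 : Matrix (Fin n) (Fin n) ℝ) - B) :=
      (continuous_id.smul continuous_const).sub continuous_const
    have hinv_eq : ∀ r : ℝ, ((r • (1 : Matrix (Fin n) (Fin n) ℝ) - B)⁻¹) i j = g r := by
      intro r
      rw [Matrix.inv_def, Matrix.smul_apply, Ring.inverse_eq_inv', smul_eq_mul]
    have hgat : ContinuousAt g s := by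
      refine ContinuousAt.mul (ContinuousAt.inv₀ hMcont.matrix_det.continuousAt hdet.ne_zero) ?_
      exact (hMcont.matrix_adjugate.matrix_elem i j).continuousAt
    have hpos : ∀ᶠ r in nhdsWithin s (Set.Ioi s), 0 ≤ g r := by
      refine eventually_nhdsWithin_of_forall fun r hr => ?_
      rw [← hinv_eq r]
      exact (resolvent_nonneg hn hB hr).2 i j
    have htend : Tendsto g (nhdsWithin s (Set.Ioi s)) (nhds (g s)) :=
      hgat.tendsto.mono_left nhdsWithin_le_nhds
    rw [hinv_eq s]
    exact ge_of_tendsto htend hpos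
  -- conclude
  set Ms := s • (1 : Matrix (Fin n) (Fin n) ℝ) - B with hMs
  set zv : Fin n → ℝ := Ms.mulVec y with hzv
  have hz_le : ∀ j, zv j ≤ 0 := by
    intro j
    have : zv j = s * y j - B.mulVec y j := by
      rw [hzv, hMs, Matrix.sub_mulVec, Matrix.smul_mulVec, Matrix.one_mulVec]
      simp
    rw [this]
    linarith [hkey j]
  have hyz : y = Ms⁻¹.mulVec zv := by
    rw [hzv, Matrix.mulVec_mulVec, Matrix.nonsing_inv_mul _ hdet, Matrix.one_mulVec]
  have hy_le : ∀ i, y i ≤ 0 := by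
    intro i
    have : y i = ∑ j, Ms⁻¹ i j * zv j := by
      rw [hyz]; rfl
    rw [this]
    exact Finset.sum_nonpos fun j _ => mul_nonpos_of_nonneg_of_nonpos (hP i j) (hz_le j)
  apply hyne
  funext i
  exact le_antisymm (hy_le i) (hy0 i)

private lemma block_det {m k : ℕ} (hk : m + k = n) (e : Equiv.Perm (Fin n))
    (N : Matrix (Fin n) (Fin n) ℝ)
    (hN : ∀ i j : Fin n, m ≤ (i : ℕ) → (j : ℕ) < m → N (e i) (e j) = 0) :
    N.det = ((N.submatrix ((finSumFinEquiv.trans (finCongr hk)).trans e)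
        ((finSumFinEquiv.trans (finCongr hk)).trans e)).toBlocks₁₁).det *
      ((N.submatrix ((finSumFinEquiv.trans (finCongr hk)).trans e)
        ((finSumFinEquiv.trans (finCongr hk)).trans e)).toBlocks₂₂).det := by
  set F := (finSumFinEquiv.trans (finCongr hk)).trans e with hF
  have h21 : (N.submatrix ⇑F ⇑F).toBlocks₂₁ = 0 := by
    ext b a
    simp only [toBlocks₂₁, of_apply, submatrix_apply, Matrix.zero_apply]
    have hvr : ((finSumFinEquiv.trans (finCongr hk)) (Sum.inr b) : ℕ) = m + (b : ℕ) := by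
      simp
    have hvl : ((finSumFinEquiv.trans (finCongr hk)) (Sum.inl a) : ℕ) = (a : ℕ) := by
      simp
    have : F (Sum.inr b) = e ((finSumFinEquiv.trans (finCongr hk)) (Sum.inr b)) := rfl
    rw [this]
    have h2 : F (Sum.inl a) = e ((finSumFinEquiv.trans (finCongr hk)) (Sum.inl a)) := rfl
    rw [h2]
    exact hN _ _ (by omega) (by rw [hvl]; exact a.isLt.trans_le (by omega))
  have h1 : N.det = (N.submatrix ⇑F ⇑F).det := (Matrix.det_submatrix_equiv_self F N).symm
  rw [h1, ← Matrix.fromBlocks_toBlocks (N.submatrix ⇑F ⇑F), h21,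
    Matrix.det_fromBlocks_zero₂₁, Matrix.toBlocks_fromBlocks₁₁, Matrix.toBlocks_fromBlocks₂₂]

theorem stmt_10 {n : ℕ} (A : Matrix (Fin n) (Fin n) ℝ)
    (hsing : IsSingMMatrix (A - 1))
    (h : ∀ d : Fin n → ℝ, (∀ i, 0 ≤ d i) → d ≠ 0 →
      IsUnit (A - 1 + Matrix.diagonal d).det) :
    ¬ IsReducibleM (A - 1) := by
  rintro ⟨m, e, hm0, hmn, hzero⟩
  obtain ⟨s, B, hB, hAB, hs⟩ := hsing
  have hn : 0 < n := hm0.trans hmn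
  have hk : m + (n - m) = n := by omega
  set F := (finSumFinEquiv.trans (finCongr hk)).trans e with hF
  -- the zero-block property holds for A - 1 + diagonal d, for every d
  have hprop : ∀ d : Fin n → ℝ, ∀ i j : Fin n, m ≤ (i : ℕ) → (j : ℕ) < m →
      (A - 1 + Matrix.diagonal d) (e i) (e j) = 0 := by
    intro d i j hi hj
    have hij : e i ≠ e j := by
      intro hcon
      have : i = j := e.injective hcon
      omega
    simp only [Matrix.add_apply, Matrix.diagonal_apply_ne _ hij, hzero i j hi hj, add_zero]
  have hdet : ∀ d : Fin n → ℝ, (A - 1 + Matrix.diagonal d).det =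
      (((A - 1 + Matrix.diagonal d).submatrix ⇑F ⇑F).toBlocks₁₁).det *
      (((A - 1 + Matrix.diagonal d).submatrix ⇑F ⇑F).toBlocks₂₂).det := fun d =>
    block_det hk e _ (hprop d)
  -- index computations
  have hvalr : ∀ b : Fin (n - m), ((F (Sum.inr b) : Fin n)) = e ⟨m + b, by omega⟩ := by
    intro b
    show e ((finSumFinEquiv.trans (finCongr hk)) (Sum.inr b)) = _
    congr 1
  have hvall : ∀ a : Fin m, ((F (Sum.inl a) : Fin n)) = e ⟨a, by omega⟩ := by
    intro a
    show e ((finSumFinEquiv.trans (finCongr hk)) (Sum.inl a)) = _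
    congr 1
  -- first perturbation: ones on the top block
  set d₁ : Fin n → ℝ := fun j => if ((e.symm j : ℕ) < m) then 1 else 0 with hd₁
  have hd₁0 : ∀ i, 0 ≤ d₁ i := by
    intro i; rw [hd₁]; dsimp only; split <;> norm_num
  have hd₁ne : d₁ ≠ 0 := by
    intro hcon
    have h1 : d₁ (e ⟨0, hn⟩) = 1 := by
      rw [hd₁]; simp [hm0]
    rw [hcon] at h1
    simp at h1
  have hu1 := h d₁ hd₁0 hd₁ne
  rw [hdet d₁] at hu1
  have hblock22 : ((A - 1 + Matrix.diagonal d₁).submatrix ⇑F ⇑F).toBlocks₂₂ =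
      ((A - 1).submatrix ⇑F ⇑F).toBlocks₂₂ := by
    ext b b'
    simp only [toBlocks₂₂, of_apply, submatrix_apply, Matrix.add_apply]
    have : Matrix.diagonal d₁ (F (Sum.inr b)) (F (Sum.inr b')) = 0 := by
      by_cases hbb : b = b'
      · subst hbb
        rw [Matrix.diagonal_apply_eq, hvalr b, hd₁]
        simp
      · exact Matrix.diagonal_apply_ne _ (fun hcon => hbb (Sum.inr_injective
          (F.injective (by exact hcon))))
    rw [this, add_zero]
  rw [hblock22] at hu1
  have hu22 : IsUnit (((A - 1).submatrix ⇑F ⇑F).toBlocks₂₂).det :=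
    isUnit_of_mul_isUnit_right hu1
  -- second perturbation: ones on the bottom block
  set d₂ : Fin n → ℝ := fun j => if (m ≤ (e.symm j : ℕ)) then 1 else 0 with hd₂
  have hd₂0 : ∀ i, 0 ≤ d₂ i := by
    intro i; rw [hd₂]; dsimp only; split <;> norm_num
  have hd₂ne : d₂ ≠ 0 := by
    intro hcon
    have h1 : d₂ (e ⟨m, hmn⟩) = 1 := by
      rw [hd₂]; simp
    rw [hcon] at h1
    simp at h1
  have hu2 := h d₂ hd₂0 hd₂ne
  rw [hdet d₂] at hu2
  have hblock11 : ((A - 1 + Matrix.diagonal d₂).submatrix ⇑F ⇑F).toBlocks₁₁ =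
      ((A - 1).submatrix ⇑F ⇑F).toBlocks₁₁ := by
    ext a a'
    simp only [toBlocks₁₁, of_apply, submatrix_apply, Matrix.add_apply]
    have : Matrix.diagonal d₂ (F (Sum.inl a)) (F (Sum.inl a')) = 0 := by
      by_cases haa : a = a'
      · subst haa
        rw [Matrix.diagonal_apply_eq, hvall a, hd₂]
        simp
      · exact Matrix.diagonal_apply_ne _ (fun hcon => haa (Sum.inl_injective
          (F.injective (by exact hcon))))
    rw [this, add_zero]
  rw [hblock11] at hu2
  have hu11 : IsUnit (((A - 1).submatrix ⇑F ⇑F).toBlocks₁₁).det :=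
    isUnit_of_mul_isUnit_left hu2
  -- contradiction
  have hunit : IsUnit (A - 1).det := by
    rw [block_det hk e _ hzero]
    exact hu11.mul hu22
  rw [hAB, ← hs] at hunit
  exact singular_at_specRad hn hB hunit
end

section
/- Let A be an n×n real matrix such that A - I is an irreducible singular M-matrix, let v > 0 satisfy (A^T - I)v = 0, and suppose v^T b = 0. Then every solution x of the AVE Ax - |x| = b satisfies x ≥ 0. -/
open Matrix

theorem stmt_13 {n : ℕ} (A : Matrix (Fin n) (Fin n) ℝ)
    (hsing : IsSingMMatrix (A - 1)) (hirr : ¬ IsReducibleM (A - 1))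
    (v : Fin n → ℝ) (hv : ∀ i, 0 < v i) (hvA : (A - 1)ᵀ *ᵥ v = 0)
    (b : Fin n → ℝ) (hvb : v ⬝ᵥ b = 0) :
    ∀ x : Fin n → ℝ, A *ᵥ x - (fun j => |x j|) = b → ∀ i, 0 ≤ x i := by
  intro x hx i
  have h1 : v ⬝ᵥ ((A - 1) *ᵥ x) = 0 := by
    rw [dotProduct_mulVec, ← mulVec_transpose, hvA, zero_dotProduct]
  have h2 : (A - 1) *ᵥ x = A *ᵥ x - x := by
    rw [sub_mulVec, one_mulVec]
  have h3 : A *ᵥ x = (fun j => |x j|) + b := by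
    rw [← hx]; ring
  have key : ∑ j, v j * (|x j| - x j) = 0 := by
    have : v ⬝ᵥ ((fun j => |x j|) - x) = 0 := by
      have := h1
      rw [h2, h3] at this
      simp only [dotProduct_sub, dotProduct_add] at this ⊢
      linarith
    simpa [dotProduct, Pi.sub_apply] using this
  have hzero : ∀ j ∈ Finset.univ, v j * (|x j| - x j) = 0 := by
    rw [← Finset.sum_eq_zero_iff_of_nonneg]
    · exact key
    · intro j _
      exact mul_nonneg (hv j).le (sub_nonneg.mpr (le_abs_self _))
  have := hzero i (Finset.mem_univ i)
  rcases mul_eq_zero.mp this with h | h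
  · exact absurd h (hv i).ne'
  · have : |x i| = x i := by linarith [sub_eq_zero.mp h]
    rw [← this]; exact abs_nonneg _
end

section
/- Let A be an n×n real matrix such that A - I is an irreducible singular M-matrix, v > 0 with (A^T - I)v = 0, and v^T b = 0. If x⁰ ∈ ℝⁿ has at least one component ≤ 0 (i.e., D(x⁰) ≠ I), then A - D(x⁰) is a nonsingular M-matrix and the next Newton iterate x¹ = (A - D(x⁰))^{-1} b again has at least one nonpositive component. -/
open Matrix

lemma exists_perm_split {n : ℕ} (T : Finset (Fin n)) :
    ∃ e : Equiv.Perm (Fin n), ∀ i : Fin n, e i ∈ T ↔ (i : ℕ) < T.card := by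
  classical
  set m := T.card with hm
  have hmn : m ≤ n := by
    have := T.card_le_univ
    simpa [hm] using this
  have hcompl : Tᶜ.card = n - m := by
    rw [Finset.card_compl]; simp [hm]
  let f : Fin m ≃o T := T.orderIsoOfFin rfl
  let g : Fin (n - m) ≃o (Tᶜ : Finset (Fin n)) := Tᶜ.orderIsoOfFin hcompl
  let F : Fin n → Fin n := fun i =>
    if h : (i : ℕ) < m then (f ⟨i, h⟩ : Fin n)
    else (g ⟨(i : ℕ) - m, by omega⟩ : Fin n)
  have hmemF : ∀ i : Fin n, F i ∈ T ↔ (i : ℕ) < m := by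
    intro i
    by_cases h : (i : ℕ) < m
    · simp only [F, dif_pos h]
      exact iff_of_true (f ⟨i, h⟩).2 h
    · simp only [F, dif_neg h]
      have hc : (g ⟨(i:ℕ) - m, by omega⟩ : Fin n) ∈ Tᶜ := (g _).2
      rw [Finset.mem_compl] at hc
      exact iff_of_false hc h
  have hinj : Function.Injective F := by
    intro i j hij
    have hiff : ((i:ℕ) < m) ↔ ((j:ℕ) < m) := by
      rw [← hmemF i, ← hmemF j, hij]
    by_cases hi : (i : ℕ) < m
    · have hj : (j : ℕ) < m := hiff.mp hi
      simp only [F, dif_pos hi, dif_pos hj] at hij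
      have h2 := f.injective (Subtype.ext hij)
      exact Fin.ext (by simpa using h2)
    · have hj : ¬ (j : ℕ) < m := fun h => hi (hiff.mpr h)
      simp only [F, dif_neg hi, dif_neg hj] at hij
      have h2 := g.injective (Subtype.ext hij)
      have h3 : (i : ℕ) - m = (j : ℕ) - m := by simpa using h2
      exact Fin.ext (by omega)
  refine ⟨Equiv.ofBijective F (Finite.injective_iff_bijective.mp hinj), fun i => ?_⟩
  simpa using hmemF i

lemma eig_abs_lt {n : ℕ} (C : Matrix (Fin n) (Fin n) ℝ) (hC : ∀ i j, 0 ≤ C i j)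
    (hirr : ¬ IsReducibleM C) (v : Fin n → ℝ) (hv : ∀ i, 0 < v i) (t : ℝ)
    (r : Fin n → ℝ) (hr : ∀ i, 0 ≤ r i) (j0 : Fin n) (hrj : 0 < r j0)
    (hCv : Cᵀ *ᵥ v = t • v - r) :
    ∀ μ ∈ spectrum ℂ (C.map (Complex.ofReal ·)), ‖(μ : ℂ)‖ < t := by
  classical
  intro μ hμ
  set Cc := C.map (Complex.ofReal ·) with hCcdef
  rw [spectrum.mem_iff] at hμ
  have hdet : (algebraMap ℂ (Matrix (Fin n) (Fin n) ℂ) μ - Cc).det = 0 := by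
    by_contra h
    exact hμ ((Matrix.isUnit_iff_isUnit_det _).mpr (isUnit_iff_ne_zero.mpr h))
  obtain ⟨w, hw0, hw⟩ := (Matrix.exists_mulVec_eq_zero_iff).mpr hdet
  have hCw : Cc *ᵥ w = μ • w := by
    have h0 : (μ • (1 : Matrix (Fin n) (Fin n) ℂ) - Cc) *ᵥ w = 0 := by
      rwa [Algebra.algebraMap_eq_smul_one] at hw
    rw [Matrix.sub_mulVec, Matrix.smul_mulVec, Matrix.one_mulVec, sub_eq_zero] at h0
    exact h0.symm
  set a : Fin n → ℝ := fun i => ‖w i‖ with hadef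
  have ha0 : ∀ i, 0 ≤ a i := fun i => norm_nonneg _
  have key1 : ∀ i, ‖μ‖ * a i ≤ ∑ j, C i j * a j := by
    intro i
    have h1 : ‖μ‖ * a i = ‖(Cc *ᵥ w) i‖ := by
      rw [hCw]; simp [hadef]
    have h2 : (Cc *ᵥ w) i = ∑ j, Cc i j * w j := by
      simp [Matrix.mulVec, dotProduct]
    rw [h1, h2]
    calc ‖∑ j, Cc i j * w j‖ ≤ ∑ j, ‖Cc i j * w j‖ :=
          norm_sum_le _ _
      _ = ∑ j, C i j * a j := by
          apply Finset.sum_congr rfl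
          intro j _
          rw [norm_mul]
          congr 1
          simp [hCcdef, Complex.norm_real, Real.norm_eq_abs, abs_of_nonneg (hC i j)]
  set S : ℝ := ∑ i, v i * a i with hSdef
  have hSpos : 0 < S := by
    obtain ⟨i, hi⟩ := Function.ne_iff.mp hw0
    refine Finset.sum_pos' (fun i _ => mul_nonneg (hv i).le (ha0 i)) ⟨i, Finset.mem_univ _, ?_⟩
    exact mul_pos (hv i) (norm_pos_iff.mpr (by simpa using hi))
  set R : ℝ := ∑ j, r j * a j with hRdef
  have hR0 : 0 ≤ R := Finset.sum_nonneg (fun j _ => mul_nonneg (hr j) (ha0 j))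
  have h2 : ∑ i, v i * (∑ j, C i j * a j) = t * S - R := by
    have e1 : ∑ i, v i * (∑ j, C i j * a j) = ∑ j, (∑ i, C i j * v i) * a j := by
      simp_rw [Finset.mul_sum, Finset.sum_mul]
      rw [Finset.sum_comm]
      apply Finset.sum_congr rfl; intro j _
      apply Finset.sum_congr rfl; intro i _
      ring
    have e2 : ∀ j, ∑ i, C i j * v i = t * v j - r j := by
      intro j
      have := congrFun hCv j
      simpa [Matrix.mulVec, dotProduct, Matrix.transpose_apply] using this
    rw [e1]
    simp_rw [e2, sub_mul, mul_assoc]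
    rw [Finset.sum_sub_distrib, ← Finset.mul_sum]
  have hmain : ‖μ‖ * S + R ≤ t * S := by
    have h1 : ∑ i, v i * (‖μ‖ * a i) ≤ ∑ i, v i * (∑ j, C i j * a j) :=
      Finset.sum_le_sum (fun i _ => mul_le_mul_of_nonneg_left (key1 i) (hv i).le)
    have h3 : ∑ i, v i * (‖μ‖ * a i) = ‖μ‖ * S := by
      rw [hSdef, Finset.mul_sum]
      apply Finset.sum_congr rfl; intro i _; ring
    rw [h3, h2] at h1
    linarith
  have habs_le : ‖μ‖ ≤ t := by nlinarith
  rcases lt_or_eq_of_le habs_le with h | h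
  · exact h
  exfalso
  -- equality case
  have hReq : R = 0 := by nlinarith
  have hterm0 : ∀ j ∈ Finset.univ, r j * a j = 0 := by
    rw [← Finset.sum_eq_zero_iff_of_nonneg (fun j _ => mul_nonneg (hr j) (ha0 j))]
    exact hReq
  have haj0 : a j0 = 0 := by
    have := hterm0 j0 (Finset.mem_univ _)
    rcases mul_eq_zero.mp this with h' | h'
    · exact absurd h' hrj.ne'
    · exact h'
  have heq : ∀ i, ∑ j, C i j * a j = t * a i := by
    have hd0 : ∀ i ∈ Finset.univ, v i * ((∑ j, C i j * a j) - t * a i) = 0 := by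
      rw [← Finset.sum_eq_zero_iff_of_nonneg]
      · have : ∑ i, v i * ((∑ j, C i j * a j) - t * a i)
            = (∑ i, v i * (∑ j, C i j * a j)) - t * S := by
          simp_rw [mul_sub, Finset.sum_sub_distrib]
          congr 1
          rw [hSdef, Finset.mul_sum]
          apply Finset.sum_congr rfl; intro i _; ring
        rw [this, h2, hReq]; ring
      · intro i _
        have := key1 i
        rw [h] at this
        have : 0 ≤ (∑ j, C i j * a j) - t * a i := by linarith
        exact mul_nonneg (hv i).le this
    intro i
    have := hd0 i (Finset.mem_univ _)
    rcases mul_eq_zero.mp this with h' | h'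
    · exact absurd h' (hv i).ne'
    · linarith
  -- reducibility
  set T : Finset (Fin n) := Finset.univ.filter (fun k => a k ≠ 0) with hTdef
  obtain ⟨e, he⟩ := exists_perm_split T
  have hm0 : 0 < T.card := by
    obtain ⟨i, hi⟩ := Function.ne_iff.mp hw0
    have hi' : w i ≠ 0 := by simpa using hi
    refine Finset.card_pos.mpr ⟨i, ?_⟩
    simp [hTdef, hadef, hi']
  have hmn : T.card < n := by
    have hne : T ≠ Finset.univ := by
      intro hT
      have : j0 ∈ T := hT ▸ Finset.mem_univ j0
      simp [hTdef, haj0] at this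
    have := Finset.card_lt_card (Finset.ssubset_univ_iff.mpr hne)
    simpa using this
  apply hirr
  refine ⟨T.card, e, hm0, hmn, fun i j hi hj => ?_⟩
  have hei : a (e i) = 0 := by
    by_contra hne
    have hmem : e i ∈ T := by simp [hTdef, hne]
    have := (he i).mp hmem
    omega
  have hej : a (e j) ≠ 0 := by
    have : e j ∈ T := (he j).mpr hj
    simpa [hTdef] using this
  have hsum0 : ∑ k, C (e i) k * a k = 0 := by rw [heq (e i), hei, mul_zero]
  have hterm : ∀ k ∈ Finset.univ, C (e i) k * a k = 0 := by
    rw [← Finset.sum_eq_zero_iff_of_nonneg (fun k _ => mul_nonneg (hC _ k) (ha0 k))]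
    exact hsum0
  have := hterm (e j) (Finset.mem_univ _)
  rcases mul_eq_zero.mp this with h' | h'
  · exact h'
  · exact absurd h' hej

lemma specRad_lt {n : ℕ} (C : Matrix (Fin n) (Fin n) ℝ) (t : ℝ) (ht : 0 < t)
    (h : ∀ μ ∈ spectrum ℂ (C.map (Complex.ofReal ·)), ‖(μ : ℂ)‖ < t) :
    specRad C < t := by
  rw [specRad]
  by_cases hne : Nonempty (spectrum ℂ (C.map (Complex.ofReal ·)))
  · obtain ⟨μm, hμm⟩ :=
      Finite.exists_max (fun μ : spectrum ℂ (C.map (Complex.ofReal ·)) => ‖(μ : ℂ)‖)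
    exact lt_of_le_of_lt (ciSup_le hμm) (h μm μm.2)
  · rw [not_nonempty_iff] at hne
    rw [Real.iSup_of_isEmpty]
    exact ht


theorem stmt_14 {n : ℕ} (A : Matrix (Fin n) (Fin n) ℝ)
    (hsing : IsSingMMatrix (A - 1)) (hirr : ¬ IsReducibleM (A - 1))
    (v : Fin n → ℝ) (hv : ∀ i, 0 < v i) (hvA : (A - 1)ᵀ *ᵥ v = 0)
    (b : Fin n → ℝ) (hvb : v ⬝ᵥ b = 0)
    (x0 : Fin n → ℝ) (hx0 : ∃ j, x0 j ≤ 0) :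
    IsNonsingMMatrix (A - signDiag x0) ∧
      ∃ j, ((A - signDiag x0)⁻¹ *ᵥ b) j ≤ 0 := by
  classical
  obtain ⟨j0, hj0⟩ := hx0
  obtain ⟨s, B, hB, hAB, hsB⟩ := hsing
  set D := signDiag x0 with hDdef
  have hsign : ∀ y : ℝ, -1 ≤ Real.sign y ∧ Real.sign y ≤ 1 := by
    intro y
    rcases Real.sign_apply_eq y with h | h | h <;> rw [h] <;> norm_num
  have hsignj0 : Real.sign (x0 j0) ≤ 0 := by
    rcases hj0.lt_or_eq with h | h
    · rw [Real.sign_of_neg h]; norm_num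
    · rw [h, Real.sign_zero]
  -- B^T v = s v  and  s ≥ 0
  have hBv : Bᵀ *ᵥ v = s • v := by
    have h0 : (s • (1 : Matrix (Fin n) (Fin n) ℝ) - B)ᵀ *ᵥ v = 0 := by rw [← hAB]; exact hvA
    rw [transpose_sub, transpose_smul, transpose_one, Matrix.sub_mulVec,
      Matrix.smul_mulVec, Matrix.one_mulVec, sub_eq_zero] at h0
    exact h0.symm
  have hs0 : 0 ≤ s := by
    have h1 : (Bᵀ *ᵥ v) j0 = s * v j0 := by rw [hBv]; simp
    have h2 : 0 ≤ (Bᵀ *ᵥ v) j0 := by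
      have : (Bᵀ *ᵥ v) j0 = ∑ i, B i j0 * v i := by
        simp [Matrix.mulVec, dotProduct, Matrix.transpose_apply]
      rw [this]
      exact Finset.sum_nonneg fun i _ => mul_nonneg (hB i j0) (hv i).le
    nlinarith [hv j0]
  set C := B + 1 + D with hCdef
  have hC : ∀ i j, 0 ≤ C i j := by
    intro i j
    by_cases hij : i = j
    · subst hij
      have := (hsign (x0 i)).1
      simp only [hCdef, Matrix.add_apply, Matrix.one_apply_eq, hDdef, signDiag,
        Matrix.diagonal_apply_eq]
      have := hB i i
      linarith
    · simp only [hCdef, Matrix.add_apply, Matrix.one_apply_ne hij, hDdef, signDiag,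
        Matrix.diagonal_apply_ne _ hij, add_zero]
      exact hB i j
  have hAD : A - D = (s + 2) • (1 : Matrix (Fin n) (Fin n) ℝ) - C := by
    have hA : A = s • 1 - B + 1 := sub_eq_iff_eq_add.mp hAB
    rw [hA, hCdef, add_smul, two_smul]
    abel
  set r : Fin n → ℝ := fun i => (1 - Real.sign (x0 i)) * v i with hrdef
  have hr : ∀ i, 0 ≤ r i := by
    intro i
    have := (hsign (x0 i)).2
    exact mul_nonneg (by linarith) (hv i).le
  have hrj0 : 0 < r j0 := mul_pos (by linarith) (hv j0)
  have hDT : Dᵀ = D := by rw [hDdef, signDiag, Matrix.diagonal_transpose]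
  have hCv : Cᵀ *ᵥ v = (s + 2) • v - r := by
    funext i
    rw [hCdef, transpose_add, transpose_add, transpose_one, hDT]
    rw [Matrix.add_mulVec, Matrix.add_mulVec, Matrix.one_mulVec, hBv]
    simp only [hDdef, signDiag, Pi.add_apply, Pi.sub_apply, Pi.smul_apply, smul_eq_mul,
      Matrix.mulVec_diagonal, hrdef]
    ring
  have hirrC : ¬ IsReducibleM C := by
    rintro ⟨m, e, hm, hmn, hzero⟩
    refine hirr ⟨m, e, hm, hmn, fun i j hi hj => ?_⟩
    have hij : i ≠ j := by
      intro h; subst h; omega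
    have hne : e i ≠ e j := e.injective.ne hij
    have h1 := hzero i j hi hj
    have hCe : C (e i) (e j) = B (e i) (e j) := by
      simp [hCdef, Matrix.add_apply, Matrix.one_apply_ne hne, hDdef, signDiag,
        Matrix.diagonal_apply_ne _ hne]
    have h2 : (A - 1) (e i) (e j) = - B (e i) (e j) := by
      rw [hAB]
      simp [Matrix.sub_apply, Matrix.smul_apply, Matrix.one_apply_ne hne]
    rw [h2, ← hCe, h1, neg_zero]
  have key := eig_abs_lt C hC hirrC v hv (s + 2) r hr j0 hrj0 hCv
  have hspec : specRad C < s + 2 := specRad_lt C (s + 2) (by linarith) key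
  have part1 : IsNonsingMMatrix (A - D) := ⟨s + 2, C, hC, hAD, hspec⟩
  refine ⟨part1, ?_⟩
  -- invertibility
  have hdet : (A - D).det ≠ 0 := by
    intro h0
    have hmapdet : (((A - D).map (Complex.ofReal ·)).det) = 0 := by
      have hh := RingHom.map_det Complex.ofRealHom (A - D)
      rw [h0] at hh
      rw [map_zero] at hh; exact hh.symm
    have hmapeq : (A - D).map (Complex.ofReal ·)
        = algebraMap ℂ (Matrix (Fin n) (Fin n) ℂ) ((s + 2 : ℝ) : ℂ)
          - C.map (Complex.ofReal ·) := by
      rw [Algebra.algebraMap_eq_smul_one]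
      ext i j
      rw [hAD]
      by_cases hij : i = j
      · subst hij
        simp [Matrix.map_apply, Matrix.sub_apply, Matrix.smul_apply, Matrix.one_apply_eq]
      · simp [Matrix.map_apply, Matrix.sub_apply, Matrix.smul_apply, Matrix.one_apply_ne hij]
    have hmem : ((s + 2 : ℝ) : ℂ) ∈ spectrum ℂ (C.map (Complex.ofReal ·)) := by
      rw [spectrum.mem_iff]
      intro hunit
      have := (Matrix.isUnit_iff_isUnit_det _).mp hunit
      rw [← hmapeq] at this
      rw [hmapdet] at this
      exact (isUnit_iff_ne_zero.mp this) rfl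
    have := key _ hmem
    rw [Complex.norm_real, Real.norm_eq_abs, abs_of_nonneg (by linarith : (0:ℝ) ≤ s + 2)] at this
    linarith
  have hunit : IsUnit (A - D).det := isUnit_iff_ne_zero.mpr hdet
  set x1 := (A - D)⁻¹ *ᵥ b with hx1def
  have hADx1 : (A - D) *ᵥ x1 = b := by
    rw [hx1def, Matrix.mulVec_mulVec, Matrix.mul_nonsing_inv _ hunit, Matrix.one_mulVec]
  have hATv : (A - D)ᵀ *ᵥ v = r := by
    have hA1 : Aᵀ *ᵥ v = v := by
      have : (A - 1)ᵀ *ᵥ v = Aᵀ *ᵥ v - v := by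
        rw [transpose_sub, transpose_one, Matrix.sub_mulVec, Matrix.one_mulVec]
      rw [this] at hvA
      exact sub_eq_zero.mp hvA
    funext i
    rw [transpose_sub, Matrix.sub_mulVec, hA1, hDT]
    simp only [hDdef, signDiag, Pi.sub_apply, Matrix.mulVec_diagonal, hrdef]
    ring
  have hdot : ∑ i, r i * x1 i = 0 := by
    have h1 : v ⬝ᵥ ((A - D) *ᵥ x1) = ((A - D)ᵀ *ᵥ v) ⬝ᵥ x1 := by
      rw [Matrix.dotProduct_mulVec, Matrix.mulVec_transpose]
    rw [hADx1, hvb, hATv] at h1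
    simpa [dotProduct] using h1.symm
  by_contra hall
  push_neg at hall
  have hpos : 0 < ∑ i, r i * x1 i :=
    Finset.sum_pos' (fun i _ => mul_nonneg (hr i) (hall i).le)
      ⟨j0, Finset.mem_univ _, mul_pos hrj0 (hall j0)⟩
  linarith
end
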